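/- arXiv:1706.04447 — 9 statements merged into one kernel-verified Lean document; each statement's English description precedes it below -/
import Mathlib

section
/- For the controlled SIR system with reduction-of-transmission control, let J(τ) denote the eradication time of the trajectory with delayed bang-bang control u(·;τ), and let T_unc denote the eradication time of the uncontrolled trajectory (u ≡ 0). Then J is a continuous function of τ on the interval [0, T_unc], and consequently J attains a minimum on [0, T_unc]; in particular a time-optimal control within the class of delayed bang-bang controls exists. -/
/-!
Trajectories stay positive, `S` and `S + I` are nonincreasing, so both components are bounded by
`S(0) + I(0)` and the SIR vector field is Lipschitz along trajectories. Gronwall's inequality then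
bounds the distance of two trajectories by the `L¹` distance of their controls, which for the
delayed controls `u(·;τ)` and `u(·;τ')` is at most `|τ - τ'|`: the map `τ ↦ I(·;τ)` is Lipschitz,
uniformly on compact time intervals.

For a nondecreasing control the per-capita growth rate `β(1 - u)S - μ` of `I` is nonincreasing.
It is negative at the eradication time (otherwise `I` could not have decreased to `ε`), so `I`
crosses the threshold transversally. A transversal first hitting time moves continuously under
uniformly small perturbations, hence `J` is continuous on the compact interval `[0, T_unc]` and
attains its minimum there. For `τ ≥ T_unc` the controlled trajectory agrees with the uncontrolled
one up to `T_unc`, so `J(τ) = T_unc = J(T_unc)` and the minimum is global.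
-/

open MeasureTheory Set

/-- Trajectory of the SIR system with reduction-of-transmission control, in Carathéodory
(integral) form: `S' = -β(1-u)SI`, `I' = β(1-u)SI - μI` on `[0, ∞)`. -/
def IsRedTraj (β μ : ℝ) (u S I : ℝ → ℝ) : Prop :=
  ContinuousOn S (Set.Ici 0) ∧ ContinuousOn I (Set.Ici 0) ∧
  (∀ t, 0 ≤ t → S t = S 0 + ∫ s in (0:ℝ)..t, (-(β * (1 - u s) * S s * I s))) ∧
  (∀ t, 0 ≤ t → I t = I 0 + ∫ s in (0:ℝ)..t, (β * (1 - u s) * S s * I s - μ * I s))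

/-- `T` is the eradication time: the first time at which `I` reaches the threshold `ε`. -/
def IsEradicationTime (I : ℝ → ℝ) (ε T : ℝ) : Prop :=
  0 ≤ T ∧ I T = ε ∧ ∀ t, 0 ≤ t → t < T → ε < I t

/-- The delayed bang-bang control `u(·;τ)`: no control before `τ`, maximal control after. -/
noncomputable def delayedControl (umax τ : ℝ) : ℝ → ℝ := fun t => if t < τ then 0 else umax

open Filter Topology intervalIntegral

theorem le_mul_exp_of_le_add_integral {φ : ℝ → ℝ} {a L b : ℝ} (hL : 0 ≤ L)
    (hφ : ContinuousOn φ (Icc 0 b)) (h : ∀ t ∈ Icc 0 b, φ t ≤ a + ∫ s in 0..t, L * φ s) :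
    ∀ t ∈ Icc 0 b, φ t ≤ a * Real.exp (L * t) := by
  intro t ht
  have hb : 0 ≤ b := ht.1.trans ht.2
  set ψ : ℝ → ℝ := fun t => a + ∫ s in 0..t, L * φ s
  have hLφ : ContinuousOn (fun s => L * φ s) (Icc 0 b) := continuousOn_const.mul hφ
  have hψ : ContinuousOn ψ (Icc 0 b) := by
    have := continuousOn_primitive_interval (μ := volume) (a := 0) (b := b) (f := fun s => L * φ s)
    rw [uIcc_of_le hb] at this
    exact continuousOn_const.add (this (hLφ.integrableOn_compact isCompact_Icc))
  have hψ' : ∀ x ∈ Ico 0 b, HasDerivWithinAt ψ (L * φ x) (Ici x) x := by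
    intro x hx
    have hmem : Icc 0 b ∈ 𝓝[>] x :=
      nhdsWithin_mono _ Ioi_subset_Ici_self (Icc_mem_nhdsGE_of_mem hx)
    exact (integral_hasDerivWithinAt_right
      (hLφ.mono (uIcc_subset_Icc ⟨le_rfl, hb⟩ (Ico_subset_Icc_self hx))).intervalIntegrable
      ((hLφ.stronglyMeasurableAtFilter_nhdsWithin measurableSet_Icc x).filter_mono
        (nhdsWithin_le_of_mem hmem))
      ((hLφ x (Ico_subset_Icc_self hx)).mono_of_mem_nhdsWithin hmem)).const_add a
  calc φ t ≤ ψ t := h t ht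
    _ ≤ gronwallBound a L 0 (t - 0) :=
      le_gronwallBound_of_liminf_deriv_right_le hψ
        (fun x hx _ hr => (hψ' x hx).liminf_right_slope_le hr) (by simp [ψ])
        (fun x hx => by
          rw [add_zero]
          exact mul_le_mul_of_nonneg_left (h x (Ico_subset_Icc_self hx)) hL) t ht
    _ = a * Real.exp (L * t) := by rw [sub_zero, gronwallBound_ε0]

theorem sub_eq_integral_of_eq_add_integral {f g : ℝ → ℝ}
    (hg : ∀ t, 0 ≤ t → IntervalIntegrable g volume 0 t)
    (hf : ∀ t, 0 ≤ t → f t = f 0 + ∫ s in 0..t, g s) {t₁ t₂ : ℝ} (h₁ : 0 ≤ t₁) (h₂ : 0 ≤ t₂) :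
    f t₂ - f t₁ = ∫ s in t₁..t₂, g s := by
  rw [hf t₂ h₂, hf t₁ h₁, ← integral_interval_sub_left (hg t₂ h₂) (hg t₁ h₁)]
  ring

theorem pos_of_eq_add_integral {f F : ℝ → ℝ} (hf : ContinuousOn f (Ici 0))
    (hF : ∀ t, 0 ≤ t → IntervalIntegrable F volume 0 t)
    (hFf : ∀ b, ∃ C, ∀ s ∈ Icc 0 b, |F s| ≤ C * |f s|)
    (heq : ∀ t, 0 ≤ t → f t = f 0 + ∫ s in 0..t, F s) (h0 : 0 < f 0)
    {t : ℝ} (ht : 0 ≤ t) : 0 < f t := by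
  by_contra! hft
  obtain ⟨t₀, ht₀, hzero⟩ := intermediate_value_Icc' ht (hf.mono Icc_subset_Ici_self) ⟨hft, h0.le⟩
  obtain ⟨C, hC⟩ := hFf t₀
  -- Gronwall, run backwards from the zero `t₀`, forces `f` to vanish at `0`.
  set φ : ℝ → ℝ := fun r => |f (t₀ - r)|
  have hφ : ContinuousOn φ (Icc 0 t₀) :=
    (hf.comp (continuousOn_const.sub continuousOn_id) fun _ hr => sub_nonneg.2 hr.2).abs
  have hbound : ∀ r ∈ Icc 0 t₀, φ r ≤ 0 + ∫ s in 0..r, max C 0 * φ s := by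
    intro r hr
    have hr₀ : 0 ≤ t₀ - r := sub_nonneg.2 hr.2
    have hsub : t₀ - r ≤ t₀ := sub_le_self _ hr.1
    calc φ r = |f t₀ - f (t₀ - r)| := by simp [φ, hzero, abs_neg]
      _ = |∫ s in (t₀ - r)..t₀, F s| := by
        rw [sub_eq_integral_of_eq_add_integral hF heq hr₀ ht₀.1]
      _ ≤ ∫ s in (t₀ - r)..t₀, |F s| := abs_integral_le_integral_abs hsub
      _ ≤ ∫ s in (t₀ - r)..t₀, max C 0 * |f s| := by
        refine integral_mono_on hsub (((hF _ hr₀).symm.trans (hF _ ht₀.1)).abs)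
          (continuousOn_const.mul (hf.mono (ordConnected_Ici.uIcc_subset hr₀ ht₀.1)).abs
            |>.intervalIntegrable) fun s hs => ?_
        exact (hC s ⟨hr₀.trans hs.1, hs.2⟩).trans
          (mul_le_mul_of_nonneg_right (le_max_left _ _) (abs_nonneg _))
      _ = 0 + ∫ s in 0..r, max C 0 * φ s := by
        rw [zero_add, integral_comp_sub_left (fun s => max C 0 * |f s|)]
        simp
  have := le_mul_exp_of_le_add_integral (le_max_right C 0) hφ hbound t₀ ⟨ht₀.1, le_rfl⟩
  simp only [φ, sub_self, zero_mul, abs_nonpos_iff] at this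
  exact h0.ne' this

structure IsAdmissibleControl (u : ℝ → ℝ) : Prop where
  measurable : Measurable u
  nonneg : ∀ t, 0 ≤ u t
  le_one : ∀ t, u t ≤ 1

namespace IsAdmissibleControl

variable {u : ℝ → ℝ}

theorem abs_one_sub_le (hu : IsAdmissibleControl u) (t : ℝ) : |1 - u t| ≤ 1 :=
  abs_le.2 ⟨by linarith [hu.nonneg t, hu.le_one t], by linarith [hu.nonneg t]⟩

theorem intervalIntegrable (hu : IsAdmissibleControl u) (a b : ℝ) :
    IntervalIntegrable u volume a b := by
  refine (intervalIntegrable_const (c := (1 : ℝ))).mono_fun hu.measurable.aestronglyMeasurable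
    (ae_of_all _ fun t => ?_)
  simp only [Real.norm_eq_abs, norm_one, abs_of_nonneg (hu.nonneg t)]
  exact hu.le_one t

end IsAdmissibleControl

theorem abs_one_sub_mul_mul_sub_le {v₁ v₂ x₁ x₂ y₁ y₂ B : ℝ} (hv : |1 - v₁| ≤ 1)
    (hx₁ : |x₁| ≤ B) (hx₂ : |x₂| ≤ B) (hy₂ : |y₂| ≤ B) :
    |(1 - v₁) * x₁ * y₁ - (1 - v₂) * x₂ * y₂| ≤
      B * (|x₁ - x₂| + |y₁ - y₂|) + B ^ 2 * |v₁ - v₂| := by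
  have hB : 0 ≤ B := (abs_nonneg _).trans hx₁
  calc |(1 - v₁) * x₁ * y₁ - (1 - v₂) * x₂ * y₂|
      = |(1 - v₁) * ((x₁ - x₂) * y₂ + x₁ * (y₁ - y₂)) + (v₂ - v₁) * x₂ * y₂| := by
        congr 1; ring
    _ ≤ |1 - v₁| * (|x₁ - x₂| * |y₂| + |x₁| * |y₁ - y₂|) + |v₁ - v₂| * |x₂| * |y₂| := by
        refine (abs_add_le _ _).trans (add_le_add ?_ ?_)
        · rw [abs_mul]
          gcongr
          exact (abs_add_le _ _).trans (by rw [abs_mul, abs_mul])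
        · rw [abs_mul, abs_mul, abs_sub_comm]
    _ ≤ 1 * (|x₁ - x₂| * B + B * |y₁ - y₂|) + |v₁ - v₂| * B * B := by gcongr
    _ = B * (|x₁ - x₂| + |y₁ - y₂|) + B ^ 2 * |v₁ - v₂| := by ring

theorem abs_sub_sir_field_le {β μ v₁ v₂ x₁ x₂ y₁ y₂ B : ℝ} (hβ : 0 ≤ β) (hμ : 0 ≤ μ)
    (hv : |1 - v₁| ≤ 1) (hx₁ : |x₁| ≤ B) (hx₂ : |x₂| ≤ B) (hy₂ : |y₂| ≤ B) :
    |-(β * (1 - v₁) * x₁ * y₁) - -(β * (1 - v₂) * x₂ * y₂)| +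
        |(β * (1 - v₁) * x₁ * y₁ - μ * y₁) - (β * (1 - v₂) * x₂ * y₂ - μ * y₂)| ≤
      (2 * β * B + μ) * (|x₁ - x₂| + |y₁ - y₂|) + 2 * β * B ^ 2 * |v₁ - v₂| := by
  set D := (1 - v₁) * x₁ * y₁ - (1 - v₂) * x₂ * y₂
  have hD : β * |D| ≤ β * (B * (|x₁ - x₂| + |y₁ - y₂|) + B ^ 2 * |v₁ - v₂|) :=
    mul_le_mul_of_nonneg_left (abs_one_sub_mul_mul_sub_le hv hx₁ hx₂ hy₂) hβ
  have hy : μ * |y₁ - y₂| ≤ μ * (|x₁ - x₂| + |y₁ - y₂|) :=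
    mul_le_mul_of_nonneg_left (le_add_of_nonneg_left (abs_nonneg _)) hμ
  have hsub := abs_sub (β * D) (μ * (y₁ - y₂))
  rw [abs_mul, abs_mul, abs_of_nonneg hβ, abs_of_nonneg hμ] at hsub
  calc _ = |-(β * D)| + |β * D - μ * (y₁ - y₂)| := by congr 2 <;> ring
    _ ≤ β * |D| + (β * |D| + μ * |y₁ - y₂|) := by
      rw [abs_neg, abs_mul, abs_of_nonneg hβ]
      gcongr
    _ ≤ _ := by linarith

namespace IsRedTraj

variable {β μ : ℝ} {u S I : ℝ → ℝ}

theorem intervalIntegrable_incidence (hu : IsAdmissibleControl u) (hT : IsRedTraj β μ u S I)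
    {a b : ℝ} (ha : 0 ≤ a) (hb : 0 ≤ b) :
    IntervalIntegrable (fun s => β * (1 - u s) * S s * I s) volume a b :=
  have hab := ordConnected_Ici.uIcc_subset (mem_Ici.2 ha) (mem_Ici.2 hb)
  (((intervalIntegrable_const.sub (hu.intervalIntegrable a b)).const_mul β).mul_continuousOn
    (hT.1.mono hab)).mul_continuousOn (hT.2.1.mono hab)

theorem intervalIntegrable_S (hu : IsAdmissibleControl u) (hT : IsRedTraj β μ u S I)
    {a b : ℝ} (ha : 0 ≤ a) (hb : 0 ≤ b) :
    IntervalIntegrable (fun s => -(β * (1 - u s) * S s * I s)) volume a b :=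
  (hT.intervalIntegrable_incidence hu ha hb).neg

theorem intervalIntegrable_I (hu : IsAdmissibleControl u) (hT : IsRedTraj β μ u S I)
    {a b : ℝ} (ha : 0 ≤ a) (hb : 0 ≤ b) :
    IntervalIntegrable (fun s => β * (1 - u s) * S s * I s - μ * I s) volume a b :=
  (hT.intervalIntegrable_incidence hu ha hb).sub (continuousOn_const.mul
    (hT.2.1.mono (ordConnected_Ici.uIcc_subset (mem_Ici.2 ha) (mem_Ici.2 hb)))).intervalIntegrable

theorem S_pos (hu : IsAdmissibleControl u) (hT : IsRedTraj β μ u S I) (hS0 : 0 < S 0)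
    {t : ℝ} (ht : 0 ≤ t) : 0 < S t := by
  refine pos_of_eq_add_integral hT.1 (fun t ht => hT.intervalIntegrable_S hu le_rfl ht)
    (fun b => ?_) hT.2.2.1 hS0 ht
  obtain ⟨M, hM⟩ := isCompact_Icc.exists_bound_of_continuousOn
    (hT.2.1.mono (Icc_subset_Ici_self : Icc 0 b ⊆ Ici 0))
  refine ⟨|β| * M, fun s hs => ?_⟩
  have := hM s hs
  rw [Real.norm_eq_abs] at this
  calc |-(β * (1 - u s) * S s * I s)| = |β| * |1 - u s| * |I s| * |S s| := by
        rw [abs_neg, abs_mul, abs_mul, abs_mul]; ring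
    _ ≤ |β| * 1 * M * |S s| := by gcongr; exact hu.abs_one_sub_le s
    _ = |β| * M * |S s| := by ring

theorem I_pos (hu : IsAdmissibleControl u) (hT : IsRedTraj β μ u S I) (hI0 : 0 < I 0)
    {t : ℝ} (ht : 0 ≤ t) : 0 < I t := by
  refine pos_of_eq_add_integral hT.2.1 (fun t ht => hT.intervalIntegrable_I hu le_rfl ht)
    (fun b => ?_) hT.2.2.2 hI0 ht
  obtain ⟨M, hM⟩ := isCompact_Icc.exists_bound_of_continuousOn
    (hT.1.mono (Icc_subset_Ici_self : Icc 0 b ⊆ Ici 0))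
  refine ⟨|β| * M + |μ|, fun s hs => ?_⟩
  have := hM s hs
  rw [Real.norm_eq_abs] at this
  calc |β * (1 - u s) * S s * I s - μ * I s| = |(β * (1 - u s) * S s - μ) * I s| := by
        congr 1; ring
    _ ≤ (|β| * |1 - u s| * |S s| + |μ|) * |I s| := by
        rw [abs_mul]; gcongr; refine (abs_sub _ _).trans ?_; rw [abs_mul, abs_mul]
    _ ≤ (|β| * 1 * M + |μ|) * |I s| := by gcongr; exact hu.abs_one_sub_le s
    _ = (|β| * M + |μ|) * |I s| := by ring

theorem antitoneOn_S (hβ : 0 ≤ β) (hu : IsAdmissibleControl u) (hT : IsRedTraj β μ u S I)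
    (hS0 : 0 < S 0) (hI0 : 0 < I 0) : AntitoneOn S (Ici 0) := by
  intro t₁ (h₁ : 0 ≤ t₁) t₂ (h₂ : 0 ≤ t₂) h12
  have hdiff := sub_eq_integral_of_eq_add_integral
    (fun t ht => hT.intervalIntegrable_S hu le_rfl ht) hT.2.2.1 h₁ h₂
  have hnn : 0 ≤ ∫ s in t₁..t₂, β * (1 - u s) * S s * I s := integral_nonneg h12 fun s hs =>
    have hs0 : 0 ≤ s := h₁.trans hs.1
    mul_nonneg (mul_nonneg (mul_nonneg hβ (sub_nonneg.2 (hu.le_one s)))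
      (hT.S_pos hu hS0 hs0).le) (hT.I_pos hu hI0 hs0).le
  rw [intervalIntegral.integral_neg] at hdiff
  linarith

theorem antitoneOn_S_add_I (hμ : 0 ≤ μ) (hu : IsAdmissibleControl u) (hT : IsRedTraj β μ u S I)
    (hI0 : 0 < I 0) : AntitoneOn (fun t => S t + I t) (Ici 0) := by
  have hint : ∀ t, 0 ≤ t → IntervalIntegrable (fun s => -(μ * I s)) volume 0 t := fun t ht =>
    (continuousOn_const.mul (hT.2.1.mono (ordConnected_Ici.uIcc_subset le_rfl ht))).neg
      |>.intervalIntegrable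
  have heq : ∀ t, 0 ≤ t → S t + I t = (S 0 + I 0) + ∫ s in 0..t, -(μ * I s) := fun t ht => by
    rw [hT.2.2.1 t ht, hT.2.2.2 t ht, add_add_add_comm, ← integral_add
      (hT.intervalIntegrable_S hu le_rfl ht) (hT.intervalIntegrable_I hu le_rfl ht)]
    congr 2
    ext s
    ring
  intro t₁ (h₁ : 0 ≤ t₁) t₂ (h₂ : 0 ≤ t₂) h12
  have hdiff := sub_eq_integral_of_eq_add_integral (f := fun t => S t + I t) hint heq h₁ h₂
  have hnn : 0 ≤ ∫ s in t₁..t₂, μ * I s := integral_nonneg h12 fun s hs =>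
    mul_nonneg hμ (hT.I_pos hu hI0 (h₁.trans hs.1)).le
  rw [intervalIntegral.integral_neg] at hdiff
  change S t₂ + I t₂ ≤ S t₁ + I t₁
  linarith

theorem abs_S_le (hβ : 0 ≤ β) (hu : IsAdmissibleControl u) (hT : IsRedTraj β μ u S I)
    (hS0 : 0 < S 0) (hI0 : 0 < I 0) {t : ℝ} (ht : 0 ≤ t) : |S t| ≤ S 0 + I 0 := by
  rw [abs_of_pos (hT.S_pos hu hS0 ht)]
  linarith [hT.antitoneOn_S hβ hu hS0 hI0 self_mem_Ici (mem_Ici.2 ht) ht]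

theorem abs_I_le (hμ : 0 ≤ μ) (hu : IsAdmissibleControl u) (hT : IsRedTraj β μ u S I)
    (hS0 : 0 < S 0) (hI0 : 0 < I 0) {t : ℝ} (ht : 0 ≤ t) : |I t| ≤ S 0 + I 0 := by
  rw [abs_of_pos (hT.I_pos hu hI0 ht)]
  linarith [hT.antitoneOn_S_add_I hμ hu hI0 self_mem_Ici (mem_Ici.2 ht) ht, hT.S_pos hu hS0 ht]

theorem abs_sub_add_abs_sub_le_integral {u₁ u₂ S₁ I₁ S₂ I₂ : ℝ → ℝ}
    (hu₁ : IsAdmissibleControl u₁) (hu₂ : IsAdmissibleControl u₂)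
    (h₁ : IsRedTraj β μ u₁ S₁ I₁) (h₂ : IsRedTraj β μ u₂ S₂ I₂)
    (hS0 : S₁ 0 = S₂ 0) (hI0 : I₁ 0 = I₂ 0) {t : ℝ} (ht : 0 ≤ t) :
    |S₁ t - S₂ t| + |I₁ t - I₂ t| ≤
      ∫ s in 0..t, (|-(β * (1 - u₁ s) * S₁ s * I₁ s) - -(β * (1 - u₂ s) * S₂ s * I₂ s)| +
        |(β * (1 - u₁ s) * S₁ s * I₁ s - μ * I₁ s) -
          (β * (1 - u₂ s) * S₂ s * I₂ s - μ * I₂ s)|) := by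
  have iS₁ := h₁.intervalIntegrable_S hu₁ le_rfl ht
  have iS₂ := h₂.intervalIntegrable_S hu₂ le_rfl ht
  have iI₁ := h₁.intervalIntegrable_I hu₁ le_rfl ht
  have iI₂ := h₂.intervalIntegrable_I hu₂ le_rfl ht
  have eS : S₁ t - S₂ t =
      ∫ s in 0..t, (-(β * (1 - u₁ s) * S₁ s * I₁ s) - -(β * (1 - u₂ s) * S₂ s * I₂ s)) := by
    rw [integral_sub iS₁ iS₂, h₁.2.2.1 t ht, h₂.2.2.1 t ht, hS0]
    ring
  have eI : I₁ t - I₂ t = ∫ s in 0..t, ((β * (1 - u₁ s) * S₁ s * I₁ s - μ * I₁ s) -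
      (β * (1 - u₂ s) * S₂ s * I₂ s - μ * I₂ s)) := by
    rw [integral_sub iI₁ iI₂, h₁.2.2.2 t ht, h₂.2.2.2 t ht, hI0]
    ring
  rw [eS, eI, integral_add (iS₁.sub iS₂).abs (iI₁.sub iI₂).abs]
  exact add_le_add (abs_integral_le_integral_abs ht) (abs_integral_le_integral_abs ht)

theorem abs_sub_add_abs_sub_le_mul_exp {u₁ u₂ S₁ I₁ S₂ I₂ : ℝ → ℝ} (hβ : 0 ≤ β) (hμ : 0 ≤ μ)
    (hu₁ : IsAdmissibleControl u₁) (hu₂ : IsAdmissibleControl u₂)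
    (h₁ : IsRedTraj β μ u₁ S₁ I₁) (h₂ : IsRedTraj β μ u₂ S₂ I₂) (hS0 : S₁ 0 = S₂ 0)
    (hI0 : I₁ 0 = I₂ 0) (hS0pos : 0 < S₁ 0) (hI0pos : 0 < I₁ 0) {b δ : ℝ}
    (hu : ∀ t ∈ Icc 0 b, ∫ s in 0..t, |u₁ s - u₂ s| ≤ δ) :
    ∀ t ∈ Icc 0 b, |S₁ t - S₂ t| + |I₁ t - I₂ t| ≤
      2 * β * (S₁ 0 + I₁ 0) ^ 2 * δ * Real.exp ((2 * β * (S₁ 0 + I₁ 0) + μ) * t) := by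
  set B := S₁ 0 + I₁ 0
  have hS₂0 : 0 < S₂ 0 := hS0 ▸ hS0pos
  have hI₂0 : 0 < I₂ 0 := hI0 ▸ hI0pos
  have hB₂ : S₂ 0 + I₂ 0 = B := by rw [← hS0, ← hI0]
  set φ : ℝ → ℝ := fun s => |S₁ s - S₂ s| + |I₁ s - I₂ s|
  have hφ : ContinuousOn φ (Ici 0) := (h₁.1.sub h₂.1).abs.add (h₁.2.1.sub h₂.2.1).abs
  refine le_mul_exp_of_le_add_integral (by positivity) (hφ.mono Icc_subset_Ici_self)
    fun t ht => ?_
  have iφ : IntervalIntegrable (fun s => (2 * β * B + μ) * φ s) volume 0 t :=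
    (continuousOn_const.mul (hφ.mono (ordConnected_Ici.uIcc_subset le_rfl ht.1))).intervalIntegrable
  have iu : IntervalIntegrable (fun s => 2 * β * B ^ 2 * |u₁ s - u₂ s|) volume 0 t :=
    ((hu₁.intervalIntegrable 0 t).sub (hu₂.intervalIntegrable 0 t)).abs.const_mul _
  calc φ t ≤ _ := h₁.abs_sub_add_abs_sub_le_integral hu₁ hu₂ h₂ hS0 hI0 ht.1
    _ ≤ ∫ s in 0..t, ((2 * β * B + μ) * φ s + 2 * β * B ^ 2 * |u₁ s - u₂ s|) := by
      refine integral_mono_on ht.1 ?_ (iφ.add iu) fun s hs => ?_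
      · exact ((h₁.intervalIntegrable_S hu₁ le_rfl ht.1).sub
          (h₂.intervalIntegrable_S hu₂ le_rfl ht.1)).abs.add
          ((h₁.intervalIntegrable_I hu₁ le_rfl ht.1).sub
          (h₂.intervalIntegrable_I hu₂ le_rfl ht.1)).abs
      · exact abs_sub_sir_field_le hβ hμ (hu₁.abs_one_sub_le s)
          (h₁.abs_S_le hβ hu₁ hS0pos hI0pos hs.1) (hB₂ ▸ h₂.abs_S_le hβ hu₂ hS₂0 hI₂0 hs.1)
          (hB₂ ▸ h₂.abs_I_le hμ hu₂ hS₂0 hI₂0 hs.1)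
    _ = 2 * β * B ^ 2 * (∫ s in 0..t, |u₁ s - u₂ s|) + ∫ s in 0..t, (2 * β * B + μ) * φ s := by
      rw [integral_add iφ iu, intervalIntegral.integral_const_mul (2 * β * B ^ 2), add_comm]
    _ ≤ 2 * β * B ^ 2 * δ + ∫ s in 0..t, (2 * β * B + μ) * φ s := by
      gcongr
      exact hu t ht

theorem lt_of_isEradicationTime_lt (hβ : 0 ≤ β) (hu : IsAdmissibleControl u) (hmono : Monotone u)
    (hT : IsRedTraj β μ u S I) (hS0 : 0 < S 0) (hI0 : 0 < I 0) {ε T : ℝ} (hεI : ε < I 0)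
    (hE : IsEradicationTime I ε T) {t : ℝ} (ht : T < t) : I t < ε := by
  set c : ℝ → ℝ := fun s => β * (1 - u s) * S s - μ
  have hc : AntitoneOn c (Ici 0) := fun s hs s' hs' hss' => by
    have := mul_le_mul (sub_le_sub_left (hmono hss') 1) (hT.antitoneOn_S hβ hu hS0 hI0 hs hs' hss')
      (hT.S_pos hu hS0 hs').le (sub_nonneg.2 (hu.le_one s))
    have := mul_le_mul_of_nonneg_left this hβ
    simp only [c]
    linarith
  have hrhs : ∀ s, β * (1 - u s) * S s * I s - μ * I s = c s * I s := fun s => by ring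
  have hint := fun t (ht : 0 ≤ t) => hT.intervalIntegrable_I hu le_rfl ht
  have hT0 := hE.1
  -- Otherwise `c ≥ 0` on `[0, T]`, and `I` could not decrease from `I 0 > ε` to `I T = ε`.
  have hcT : c T < 0 := by
    by_contra! hcT
    have hnn : 0 ≤ ∫ s in 0..T, (β * (1 - u s) * S s * I s - μ * I s) :=
      integral_nonneg hT0 fun s hs => by
        rw [hrhs]
        exact mul_nonneg (hcT.trans (hc hs.1 hT0 hs.2)) (hT.I_pos hu hI0 hs.1).le
    linarith [hT.2.2.2 T hT0, hE.2.1]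
  have hneg : 0 < ∫ s in T..t, -(β * (1 - u s) * S s * I s - μ * I s) := by
    refine intervalIntegral_pos_of_pos_on ((hint T hT0).symm.trans (hint t (hT0.trans ht.le))).neg
      (fun s hs => ?_) ht
    have hs0 : 0 ≤ s := hT0.trans hs.1.le
    rw [hrhs, neg_pos]
    exact mul_neg_of_neg_of_pos ((hc hT0 hs0 hs.1.le).trans_lt hcT) (hT.I_pos hu hI0 hs0)
  have hdiff := sub_eq_integral_of_eq_add_integral hint hT.2.2.2 hT0 (hT0.trans ht.le)
  rw [intervalIntegral.integral_neg] at hneg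
  linarith [hE.2.1]

end IsRedTraj

theorem isAdmissibleControl_delayedControl {a : ℝ} (ha₀ : 0 ≤ a) (ha₁ : a ≤ 1) (τ : ℝ) :
    IsAdmissibleControl (delayedControl a τ) where
  measurable := measurable_const.ite measurableSet_Iio measurable_const
  nonneg t := by unfold delayedControl; split_ifs <;> simp [ha₀]
  le_one t := by unfold delayedControl; split_ifs <;> linarith

theorem monotone_delayedControl {a : ℝ} (ha : 0 ≤ a) (τ : ℝ) : Monotone (delayedControl a τ) := by
  intro s t hst
  unfold delayedControl
  split_ifs <;> linarith

theorem abs_delayedControl_sub (a τ τ' s : ℝ) :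
    |delayedControl a τ s - delayedControl a τ' s| =
      (Ico (min τ τ') (max τ τ')).indicator (fun _ => |a|) s := by
  simp only [delayedControl, indicator, mem_Ico, min_le_iff, lt_max_iff]
  split_ifs <;> grind

theorem integral_abs_delayedControl_sub_le (a τ τ' : ℝ) {t : ℝ} (ht : 0 ≤ t) :
    ∫ s in 0..t, |delayedControl a τ s - delayedControl a τ' s| ≤ |a| * |τ - τ'| := by
  simp_rw [abs_delayedControl_sub]
  rw [integral_of_le ht, setIntegral_indicator measurableSet_Ico, setIntegral_const, smul_eq_mul]
  calc volume.real (Ioc 0 t ∩ Ico (min τ τ') (max τ τ')) * |a|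
      ≤ volume.real (Ico (min τ τ') (max τ τ')) * |a| :=
        mul_le_mul_of_nonneg_right (measureReal_mono inter_subset_right measure_Ico_lt_top.ne)
          (abs_nonneg a)
    _ = |a| * |τ - τ'| := by
      rw [Real.volume_real_Ico_of_le min_le_max, max_sub_min_eq_abs', mul_comm]

theorem integral_abs_delayedControl_eq_zero (a : ℝ) {τ t : ℝ} (ht₀ : 0 ≤ t) (ht : t ≤ τ) :
    ∫ s in 0..t, |delayedControl a τ s| = 0 := by
  rw [integral_of_le ht₀, integral_Ioc_eq_integral_Ioo]
  exact setIntegral_eq_zero_of_forall_eq_zero fun s hs => by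
    simp [delayedControl, hs.2.trans_le ht]

namespace IsRedTraj

variable {β μ a : ℝ} {S₁ I₁ S₂ I₂ : ℝ → ℝ}

theorem abs_sub_I_le_of_delayedControl (hβ : 0 ≤ β) (hμ : 0 ≤ μ) (ha₀ : 0 ≤ a) (ha₁ : a ≤ 1)
    {τ₁ τ₂ S₀ I₀ : ℝ} (h₁ : IsRedTraj β μ (delayedControl a τ₁) S₁ I₁)
    (h₂ : IsRedTraj β μ (delayedControl a τ₂) S₂ I₂) (hinit₁ : S₁ 0 = S₀ ∧ I₁ 0 = I₀)
    (hinit₂ : S₂ 0 = S₀ ∧ I₂ 0 = I₀) (hS₀ : 0 < S₀) (hI₀ : 0 < I₀) {b t : ℝ} (ht : t ∈ Icc 0 b) :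
    |I₁ t - I₂ t| ≤
      2 * β * (S₀ + I₀) ^ 2 * a * Real.exp ((2 * β * (S₀ + I₀) + μ) * b) * |τ₁ - τ₂| := by
  obtain ⟨rfl, rfl⟩ := hinit₁
  have hcmp := h₁.abs_sub_add_abs_sub_le_mul_exp hβ hμ
    (isAdmissibleControl_delayedControl ha₀ ha₁ τ₁)
    (isAdmissibleControl_delayedControl ha₀ ha₁ τ₂) h₂ hinit₂.1.symm hinit₂.2.symm hS₀ hI₀
    (fun t ht => (integral_abs_delayedControl_sub_le a τ₁ τ₂ ht.1).trans_eq
      (by rw [abs_of_nonneg ha₀])) t ht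
  calc |I₁ t - I₂ t| ≤ |S₁ t - S₂ t| + |I₁ t - I₂ t| := le_add_of_nonneg_left (abs_nonneg _)
    _ ≤ _ := hcmp
    _ = 2 * β * (S₁ 0 + I₁ 0) ^ 2 * a * Real.exp ((2 * β * (S₁ 0 + I₁ 0) + μ) * t) *
        |τ₁ - τ₂| := by ring
    _ ≤ _ := by gcongr; exact ht.2

theorem I_eq_of_delayedControl (hβ : 0 ≤ β) (hμ : 0 ≤ μ) (ha₀ : 0 ≤ a) (ha₁ : a ≤ 1)
    {τ S₀ I₀ : ℝ} (h₁ : IsRedTraj β μ (delayedControl a τ) S₁ I₁)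
    (h₂ : IsRedTraj β μ (fun _ => 0) S₂ I₂) (hinit₁ : S₁ 0 = S₀ ∧ I₁ 0 = I₀)
    (hinit₂ : S₂ 0 = S₀ ∧ I₂ 0 = I₀) (hS₀ : 0 < S₀) (hI₀ : 0 < I₀) :
    ∀ t ∈ Icc 0 τ, I₁ t = I₂ t := by
  obtain ⟨rfl, rfl⟩ := hinit₁
  intro t ht
  have hcmp := h₁.abs_sub_add_abs_sub_le_mul_exp hβ hμ
    (isAdmissibleControl_delayedControl ha₀ ha₁ τ)
    ⟨measurable_const, fun _ => le_rfl, fun _ => zero_le_one⟩ h₂ hinit₂.1.symm hinit₂.2.symm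
    hS₀ hI₀ (δ := 0) (fun t ht => by simpa only [sub_zero] using
      (integral_abs_delayedControl_eq_zero a ht.1 ht.2).le) t ht
  rw [mul_zero, zero_mul] at hcmp
  exact sub_eq_zero.1 (abs_nonpos_iff.1 (by linarith [abs_nonneg (S₁ t - S₂ t)]))

end IsRedTraj

theorem IsEradicationTime.unique {f : ℝ → ℝ} {ε T T' : ℝ} (h : IsEradicationTime f ε T)
    (h' : IsEradicationTime f ε T') : T = T' := by
  by_contra hne
  rcases lt_or_gt_of_ne hne with hlt | hlt
  · exact (h'.2.2 T h.1 hlt).ne' h.2.1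
  · exact (h.2.2 T' h'.1 hlt).ne' h'.2.1

theorem IsEradicationTime.congr {f g : ℝ → ℝ} {ε T : ℝ} (h : IsEradicationTime f ε T)
    (hfg : ∀ t ∈ Icc 0 T, f t = g t) : IsEradicationTime g ε T :=
  ⟨h.1, hfg T ⟨h.1, le_rfl⟩ ▸ h.2.1, fun t ht htT => hfg t ⟨ht, htT.le⟩ ▸ h.2.2 t ht htT⟩

theorem tendstoUniformlyOn_of_abs_sub_le_mul {F : ℝ → ℝ → ℝ} {s A : Set ℝ} {τ₀ K : ℝ}
    (h : ∀ τ ∈ s, ∀ t ∈ A, |F τ t - F τ₀ t| ≤ K * |τ - τ₀|) :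
    TendstoUniformlyOn F (F τ₀) (𝓝[s] τ₀) A := by
  rw [Metric.tendstoUniformlyOn_iff]
  intro η hη
  have hK : Tendsto (fun τ => K * |τ - τ₀|) (𝓝[s] τ₀) (𝓝 0) := by
    have : Tendsto (fun τ => K * |τ - τ₀|) (𝓝 τ₀) (𝓝 (K * |τ₀ - τ₀|)) :=
      (by fun_prop : Continuous fun τ => K * |τ - τ₀|).tendsto τ₀
    simpa using this.mono_left nhdsWithin_le_nhds
  filter_upwards [self_mem_nhdsWithin, hK.eventually_lt_const hη] with τ hτ hKτ t ht
  rw [Real.dist_eq, abs_sub_comm]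
  exact (h τ hτ t ht).trans_lt hKτ

theorem continuousWithinAt_of_isEradicationTime {F : ℝ → ℝ → ℝ} {J : ℝ → ℝ} {s : Set ℝ}
    {τ₀ ε : ℝ} (hJ : ∀ τ ∈ s, IsEradicationTime (F τ) ε (J τ)) (hτ₀ : τ₀ ∈ s)
    (hF : ContinuousOn (F τ₀) (Ici 0)) (hcross : ∀ t, J τ₀ < t → F τ₀ t < ε)
    (hunif : ∀ b, TendstoUniformlyOn F (F τ₀) (𝓝[s] τ₀) (Icc 0 b)) :
    ContinuousWithinAt J s τ₀ := by
  have hE₀ := hJ τ₀ hτ₀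
  refine tendsto_order.2 ⟨fun a ha => ?_, fun a ha => ?_⟩
  · rcases lt_or_ge a 0 with ha₀ | ha₀
    · filter_upwards [self_mem_nhdsWithin] with τ hτ using ha₀.trans_le (hJ τ hτ).1
    -- `F τ₀` stays above `ε` by a margin on `[0, a]`, hence so does every nearby `F τ`.
    obtain ⟨x, hx, hmin⟩ := isCompact_Icc.exists_isMinOn (nonempty_Icc.2 ha₀)
      (hF.mono Icc_subset_Ici_self)
    have hgap : ε < F τ₀ x := hE₀.2.2 x hx.1 (hx.2.trans_lt ha)
    filter_upwards [self_mem_nhdsWithin,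
      Metric.tendstoUniformlyOn_iff.1 (hunif a) _ (sub_pos.2 hgap)] with τ hτ hclose
    by_contra! hle
    have hE := hJ τ hτ
    have h₁ := hclose (J τ) ⟨hE.1, hle⟩
    have h₂ := isMinOn_iff.1 hmin (J τ) ⟨hE.1, hle⟩
    rw [Real.dist_eq, hE.2.1] at h₁
    linarith [(abs_lt.1 h₁).2]
  · obtain ⟨b, hb, hba⟩ := exists_between ha
    have hb₀ : 0 ≤ b := hE₀.1.trans hb.le
    have hgap : F τ₀ b < ε := hcross b hb
    filter_upwards [self_mem_nhdsWithin,
      Metric.tendstoUniformlyOn_iff.1 (hunif b) _ (sub_pos.2 hgap)] with τ hτ hclose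
    refine lt_of_le_of_lt (not_lt.1 fun hlt => ?_) hba
    have h₁ := hclose b ⟨hb₀, le_rfl⟩
    rw [Real.dist_eq] at h₁
    linarith [(abs_lt.1 h₁).1, (hJ τ hτ).2.2 b hb₀ hlt]

/-- For the reduction-of-transmission SIR system, the eradication time `J(τ)` of the delayed
bang-bang control `u(·;τ)` is continuous on `[0, T_unc]` and attains a minimum there; in
particular a time-optimal control exists within the class of delayed bang-bang controls. -/
theorem reduction_delayed_eradication_time_continuous_attains_min
    (β μ umax ε S₀ I₀ : ℝ)
    (hβ : 0 < β) (hμ : 0 < μ) (humax : 0 < umax) (humax1 : umax ≤ 1) (hε : 0 < ε)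
    (hS₀ : 0 < S₀) (hI₀ : ε < I₀)
    (S I : ℝ → ℝ → ℝ)
    (hfam : ∀ τ, 0 ≤ τ → IsRedTraj β μ (delayedControl umax τ) (S τ) (I τ))
    (hinit : ∀ τ, 0 ≤ τ → S τ 0 = S₀ ∧ I τ 0 = I₀)
    (J : ℝ → ℝ)
    (hJ : ∀ τ, 0 ≤ τ → IsEradicationTime (I τ) ε (J τ))
    (Su Iu : ℝ → ℝ)
    (huncontrolled : IsRedTraj β μ (fun _ => 0) Su Iu)
    (huinit : Su 0 = S₀ ∧ Iu 0 = I₀)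
    (Tunc : ℝ) (hTunc : IsEradicationTime Iu ε Tunc) :
    ContinuousOn J (Set.Icc 0 Tunc) ∧
    ∃ τstar ∈ Set.Icc (0:ℝ) Tunc,
      (∀ τ ∈ Set.Icc (0:ℝ) Tunc, J τstar ≤ J τ) ∧
      (∀ τ, 0 ≤ τ → J τstar ≤ J τ) := by
  have hI₀pos : 0 < I₀ := hε.trans hI₀
  have hadm := isAdmissibleControl_delayedControl humax.le humax1
  have hcross : ∀ τ, 0 ≤ τ → ∀ t, J τ < t → I τ t < ε := fun τ hτ t ht => by
    obtain ⟨hS, hI⟩ := hinit τ hτ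
    exact (hfam τ hτ).lt_of_isEradicationTime_lt hβ.le (hadm τ)
      (monotone_delayedControl humax.le τ) (hS ▸ hS₀) (hI ▸ hI₀pos) (hI ▸ hI₀) (hJ τ hτ) ht
  have hlip : ∀ τ₀, 0 ≤ τ₀ → ∀ b, ∀ τ, 0 ≤ τ → ∀ t ∈ Icc 0 b, |I τ t - I τ₀ t| ≤
      2 * β * (S₀ + I₀) ^ 2 * umax * Real.exp ((2 * β * (S₀ + I₀) + μ) * b) * |τ - τ₀| :=
    fun τ₀ hτ₀ b τ hτ _ ht => (hfam τ hτ).abs_sub_I_le_of_delayedControl hβ.le hμ.le humax.le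
      humax1 (hfam τ₀ hτ₀) (hinit τ hτ) (hinit τ₀ hτ₀) hS₀ hI₀pos ht
  have hcont : ContinuousOn J (Icc 0 Tunc) := fun τ₀ hτ₀ =>
    continuousWithinAt_of_isEradicationTime (fun τ hτ => hJ τ hτ.1) hτ₀ (hfam τ₀ hτ₀.1).2.1
      (hcross τ₀ hτ₀.1) fun b =>
        tendstoUniformlyOn_of_abs_sub_le_mul fun τ hτ => hlip τ₀ hτ₀.1 b τ hτ.1
  have hJ_of_le : ∀ τ, Tunc ≤ τ → J τ = Tunc := fun τ hτ =>
    have hτ₀ := hTunc.1.trans hτ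
    (hJ τ hτ₀).unique <| hTunc.congr fun t ht => ((hfam τ hτ₀).I_eq_of_delayedControl hβ.le hμ.le
      humax.le humax1 huncontrolled (hinit τ hτ₀) huinit hS₀ hI₀pos t ⟨ht.1, ht.2.trans hτ⟩).symm
  obtain ⟨τstar, hτstar, hmin⟩ := isCompact_Icc.exists_isMinOn (nonempty_Icc.2 hTunc.1) hcont
  refine ⟨hcont, τstar, hτstar, fun τ hτ => isMinOn_iff.1 hmin τ hτ, fun τ hτ => ?_⟩
  rcases le_total τ Tunc with hle | hle
  · exact isMinOn_iff.1 hmin τ ⟨hτ, hle⟩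
  · rw [hJ_of_le τ hle, ← hJ_of_le Tunc le_rfl]
    exact isMinOn_iff.1 hmin Tunc ⟨hTunc.1, le_rfl⟩
end

section
/- For the vaccination-controlled SIR system ((α₁, α₂) = (1, 0)) with any measurable control u with values in [0, u_max] and initial data S(0) > 0, I(0) > 0, there exists a unique peak time t_p ≥ 0 (possibly 0) such that the derivative of I is strictly positive on [0, t_p) and strictly negative on (t_p, ∞); equivalently, βS(t) > μ for t < t_p and βS(t) < μ for t > t_p. -/
/-!
`I = I(0) exp ∫ (βS - μ)` stays positive, so `S' ≤ -βSI < 0` on every interval where `S > 0`: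
once `βS` has dropped to `μ` it stays strictly below `μ` forever. It does drop to `μ`, since
otherwise `I ≥ I(0)` and `S` would decrease at the uniform rate `μ I(0)`. The peak time is the
first time with `βS ≤ μ`, and `I' = (βS - μ) I` has the sign of `βS - μ`.
-/

open MeasureTheory Set

/-- Trajectory of the SIR system with linear control term, in Carathéodory (integral) form:
`S' = -βSI - α₁uS`, `I' = βSI - μI - α₂uI` on `[0, ∞)`. -/
def IsLinTraj (β μ α₁ α₂ : ℝ) (u S I : ℝ → ℝ) : Prop :=
  ContinuousOn S (Set.Ici 0) ∧ ContinuousOn I (Set.Ici 0) ∧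
  (∀ t, 0 ≤ t → S t = S 0 + ∫ s in (0:ℝ)..t, (-(β * S s * I s) - α₁ * u s * S s)) ∧
  (∀ t, 0 ≤ t → I t = I 0 + ∫ s in (0:ℝ)..t, (β * S s * I s - μ * I s - α₂ * u s * I s))

open Filter Topology intervalIntegral

theorem hasDerivWithinAt_Ici_of_eq_add_integral {F f : ℝ → ℝ} (hf : ContinuousOn f (Ici 0))
    (hF : ∀ t, 0 ≤ t → F t = F 0 + ∫ s in (0:ℝ)..t, f s) {t : ℝ} (ht : 0 ≤ t) :
    HasDerivWithinAt F (f t) (Ici 0) t := by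
  set g : ℝ → ℝ := fun s => f (max s 0)
  have hg : Continuous g :=
    hf.comp_continuous (continuous_id.max continuous_const) fun s => le_max_right s 0
  have hgf : ∀ s, 0 ≤ s → g s = f s := fun s hs => by simp only [g, max_eq_left hs]
  have hFg : ∀ s, 0 ≤ s → F s = F 0 + ∫ r in (0:ℝ)..s, g r := fun s hs => by
    rw [hF s hs, integral_congr fun r hr => (hgf r (by rw [uIcc_of_le hs] at hr; exact hr.1)).symm]
  have hderiv := ((hg.integral_hasStrictDerivAt 0 t).hasDerivAt.const_add (F 0)).hasDerivWithinAt
    (s := Ici 0)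
  rw [hgf t ht] at hderiv
  exact hderiv.congr (fun s hs => hFg s hs) (hFg t ht)

theorem eq_mul_exp_integral_of_hasDerivWithinAt {x a : ℝ → ℝ} (ha : ContinuousOn a (Ici 0))
    (hx : ∀ t, 0 ≤ t → HasDerivWithinAt x (a t * x t) (Ici 0) t) {t : ℝ} (ht : 0 ≤ t) :
    x t = x 0 * Real.exp (∫ s in (0:ℝ)..t, a s) := by
  set A : ℝ → ℝ := fun t => ∫ s in (0:ℝ)..t, a s
  have hA : ∀ s, 0 ≤ s → HasDerivWithinAt A (a s) (Ici 0) s := fun s hs =>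
    hasDerivWithinAt_Ici_of_eq_add_integral ha (fun r _ => by simp [A]) hs
  have hJ : ∀ s, 0 ≤ s → HasDerivWithinAt (fun s => x s * Real.exp (-A s)) 0 (Ici 0) s := by
    intro s hs
    refine ((hx s hs).mul (hA s hs).neg.exp).congr_deriv ?_
    ring
  have hconst := constant_of_has_deriv_right_zero
    (fun s hs => (hJ s hs.1).continuousWithinAt.mono Icc_subset_Ici_self)
    (fun s hs => (hJ s hs.1).mono (Ici_subset_Ici.2 hs.1)) t ⟨ht, le_rfl⟩
  simp only [A, integral_same, neg_zero, Real.exp_zero, mul_one] at hconst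
  rw [← hconst, mul_assoc, ← Real.exp_add, neg_add_cancel, Real.exp_zero, mul_one]

def StrictAntiWhilePos (f : ℝ → ℝ) : Prop :=
  ∀ a b, 0 ≤ a → a < b → (∀ s ∈ Icc a b, 0 < f s) → f b < f a

namespace StrictAntiWhilePos

variable {f : ℝ → ℝ} (hdec : StrictAntiWhilePos f) (hf : ContinuousOn f (Ici 0))
include hdec hf

theorem le_of_le {L a b : ℝ} (hL : 0 ≤ L) (ha : 0 ≤ a) (hab : a ≤ b) (hfa : f a ≤ L) :
    f b ≤ L := by
  by_contra! hfb
  set B := Icc a b ∩ f ⁻¹' Iic L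
  have hB : IsClosed B :=
    (hf.mono fun s hs => ha.trans hs.1).preimage_isClosed_of_isClosed isClosed_Icc isClosed_Iic
  have hBbdd : BddAbove B := ⟨b, fun s hs => hs.1.2⟩
  obtain ⟨⟨hac, hcb⟩, hfc⟩ := hB.csSup_mem ⟨a, ⟨le_rfl, hab⟩, hfa⟩ hBbdd
  set c := sSup B
  have hcb : c < b := hcb.lt_of_ne fun h => hfb.not_ge (h ▸ hfc)
  have hgt : ∀ s ∈ Ioc c b, L < f s := fun s hs => by
    by_contra! h
    exact hs.1.not_ge (le_csSup hBbdd ⟨⟨hac.trans hs.1.le, hs.2⟩, h⟩)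
  have hlt : ∀ s ∈ Ioo c b, f b < f s := fun s hs =>
    hdec s b (ha.trans (hac.trans hs.1.le)) hs.2
      fun r hr => hL.trans_lt (hgt r ⟨hs.1.trans_le hr.1, hr.2⟩)
  have hcont : Tendsto f (𝓝[>] c) (𝓝 (f c)) :=
    ((hf c (ha.trans hac)).mono fun s hs => (ha.trans hac).trans (le_of_lt hs)).tendsto
  have hfbc : f b ≤ f c :=
    ge_of_tendsto hcont (eventually_of_mem (Ioo_mem_nhdsGT hcb) fun s hs => (hlt s hs).le)
  exact hfb.not_ge (hfbc.trans hfc)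

theorem lt_of_le {L a b : ℝ} (hL : 0 < L) (ha : 0 ≤ a) (hab : a < b) (hfa : f a ≤ L) :
    f b < L := by
  by_cases hpos : ∀ s ∈ Icc a b, 0 < f s
  · exact (hdec a b ha hab hpos).trans_le hfa
  · push Not at hpos
    obtain ⟨s, hs, hfs⟩ := hpos
    exact (hdec.le_of_le hf le_rfl (ha.trans hs.1) hs.2 hfs).trans_lt hL

theorem existsUnique_threshold {L : ℝ} (hL : 0 < L) (hcross : ∃ T, 0 ≤ T ∧ f T ≤ L) :
    ∃! tp, 0 ≤ tp ∧ (∀ t, 0 ≤ t → t < tp → L < f t) ∧ (∀ t, tp < t → f t < L) := by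
  set A := Ici 0 ∩ f ⁻¹' Iic L
  have hA : IsClosed A := hf.preimage_isClosed_of_isClosed isClosed_Ici isClosed_Iic
  have hAbdd : BddBelow A := ⟨0, fun _ h => h.1⟩
  obtain ⟨htp0, htpL⟩ : 0 ≤ sInf A ∧ f (sInf A) ≤ L := hA.csInf_mem hcross hAbdd
  have hbefore : ∀ t, 0 ≤ t → t < sInf A → L < f t := fun t ht htp => by
    by_contra! h
    exact htp.not_ge (csInf_le hAbdd ⟨ht, h⟩)
  have hafter : ∀ t, sInf A < t → f t < L := fun t htp => hdec.lt_of_le hf hL htp0 htp htpL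
  refine ⟨sInf A, ⟨htp0, hbefore, hafter⟩, fun q ⟨hq0, hq1, hq2⟩ => le_antisymm ?_ ?_⟩
  all_goals by_contra! h
  · exact (hq1 _ (by linarith) (by linarith)).not_gt (hafter ((q + sInf A) / 2) (by linarith))
  · exact (hq2 _ (by linarith)).not_gt (hbefore ((q + sInf A) / 2) (by linarith) (by linarith))

end StrictAntiWhilePos

namespace IsLinTraj

variable {β μ α₁ α₂ umax : ℝ} {u S I : ℝ → ℝ}

theorem hasDerivWithinAt_I (h : IsLinTraj β μ α₁ 0 u S I) {t : ℝ} (ht : 0 ≤ t) :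
    HasDerivWithinAt I ((β * S t - μ) * I t) (Ici 0) t := by
  obtain ⟨hS, hI, -, hIeq⟩ := h
  refine hasDerivWithinAt_Ici_of_eq_add_integral (f := fun s => (β * S s - μ) * I s)
    (by fun_prop) (fun t ht => ?_) ht
  rw [hIeq t ht]
  congr 1
  exact integral_congr fun s _ => by ring

theorem I_eq_mul_exp_integral (h : IsLinTraj β μ α₁ 0 u S I) {t : ℝ} (ht : 0 ≤ t) :
    I t = I 0 * Real.exp (∫ s in (0:ℝ)..t, (β * S s - μ)) :=
  eq_mul_exp_integral_of_hasDerivWithinAt ((continuousOn_const.mul h.1).sub continuousOn_const)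
    (fun _ hs => h.hasDerivWithinAt_I hs) ht

theorem I_pos (h : IsLinTraj β μ α₁ 0 u S I) (hI0 : 0 < I 0) {t : ℝ} (ht : 0 ≤ t) : 0 < I t := by
  rw [h.I_eq_mul_exp_integral ht]
  positivity

theorem intervalIntegrable_mul_S_mul_I (h : IsLinTraj β μ α₁ α₂ u S I) {a b : ℝ} (ha : 0 ≤ a)
    (hb : 0 ≤ b) : IntervalIntegrable (fun s => β * S s * I s) volume a b :=
  have hsub : uIcc a b ⊆ Ici 0 := fun _ hs => (le_min ha hb).trans hs.1
  ((continuousOn_const.mul (h.1.mono hsub)).mul (h.2.1.mono hsub)).intervalIntegrable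

theorem S_le_sub_integral (h : IsLinTraj β μ α₁ α₂ u S I) (hα₁ : 0 ≤ α₁) (hu_meas : Measurable u)
    (hu : ∀ t, u t ∈ Icc 0 umax) {a b : ℝ} (ha : 0 ≤ a) (hab : a ≤ b)
    (hS : ∀ s ∈ Icc a b, 0 ≤ S s) :
    S b ≤ S a - ∫ s in a..b, β * S s * I s := by
  have hb : 0 ≤ b := ha.trans hab
  have hrhs : ∀ {c d : ℝ}, 0 ≤ c → 0 ≤ d →
      IntervalIntegrable (fun s => -(β * S s * I s) - α₁ * u s * S s) volume c d := by
    intro c d hc hd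
    have hu_int : IntervalIntegrable u volume c d := by
      refine (intervalIntegrable_iff.2 (Measure.integrableOn_of_bounded measure_Ioc_lt_top.ne
        hu_meas.aestronglyMeasurable (M := umax) (Eventually.of_forall fun s => ?_)))
      rw [Real.norm_eq_abs, abs_of_nonneg (hu s).1]
      exact (hu s).2
    exact (h.intervalIntegrable_mul_S_mul_I hc hd).neg.sub ((hu_int.const_mul α₁).mul_continuousOn
      (h.1.mono fun s hs => (le_min hc hd).trans hs.1))
  have hdiff : S b - S a = ∫ s in a..b, (-(β * S s * I s) - α₁ * u s * S s) := by
    rw [h.2.2.1 b hb, h.2.2.1 a ha, add_sub_add_left_eq_sub,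
      integral_interval_sub_left (hrhs le_rfl hb) (hrhs le_rfl ha)]
  have hle : ∫ s in a..b, (-(β * S s * I s) - α₁ * u s * S s) ≤ ∫ s in a..b, -(β * S s * I s) :=
    integral_mono_on hab (hrhs ha hb) (h.intervalIntegrable_mul_S_mul_I ha hb).neg
      fun s hs => by linarith [mul_nonneg (mul_nonneg hα₁ (hu s).1) (hS s hs)]
  rw [intervalIntegral.integral_neg] at hle
  linarith

theorem S_lt_of_pos (h : IsLinTraj β μ α₁ α₂ u S I) (hα₁ : 0 ≤ α₁) (hβ : 0 < β)
    (hu_meas : Measurable u) (hu : ∀ t, u t ∈ Icc 0 umax) {a b : ℝ} (ha : 0 ≤ a) (hab : a < b)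
    (hS : ∀ s ∈ Icc a b, 0 < S s) (hI : ∀ s ∈ Icc a b, 0 < I s) : S b < S a := by
  have hint : 0 < ∫ s in a..b, β * S s * I s :=
    intervalIntegral_pos_of_pos_on (h.intervalIntegrable_mul_S_mul_I ha (ha.trans hab.le))
      (fun s hs => mul_pos (mul_pos hβ (hS s (Ioo_subset_Icc_self hs)))
        (hI s (Ioo_subset_Icc_self hs))) hab
  linarith [h.S_le_sub_integral hα₁ hu_meas hu ha hab.le fun s hs => (hS s hs).le]

theorem exists_mul_S_le (h : IsLinTraj β μ α₁ 0 u S I) (hα₁ : 0 ≤ α₁) (hβ : 0 < β) (hμ : 0 < μ)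
    (hu_meas : Measurable u) (hu : ∀ t, u t ∈ Icc 0 umax) (hI0 : 0 < I 0) :
    ∃ T, 0 ≤ T ∧ β * S T ≤ μ := by
  by_contra! hcross
  have hS_pos : ∀ t, 0 ≤ t → 0 < S t := fun t ht =>
    pos_of_mul_pos_right (hμ.trans (hcross t ht)) hβ.le
  have hI_ge : ∀ t, 0 ≤ t → I 0 ≤ I t := fun t ht => by
    rw [h.I_eq_mul_exp_integral ht]
    exact le_mul_of_one_le_right hI0.le (Real.one_le_exp
      (integral_nonneg ht fun s hs => (sub_pos.2 (hcross s hs.1)).le))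
  set T := S 0 / (μ * I 0)
  have hT : 0 ≤ T := by have := hS_pos 0 le_rfl; positivity
  have hdrop : μ * I 0 * T ≤ ∫ s in (0:ℝ)..T, β * S s * I s := by
    calc μ * I 0 * T = ∫ _ in (0:ℝ)..T, μ * I 0 := by
          rw [intervalIntegral.integral_const, smul_eq_mul, sub_zero, mul_comm]
      _ ≤ ∫ s in (0:ℝ)..T, β * S s * I s :=
        integral_mono_on hT intervalIntegrable_const (h.intervalIntegrable_mul_S_mul_I le_rfl hT)
          fun s hs => mul_le_mul (hcross s hs.1).le (hI_ge s hs.1) hI0.le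
            (mul_pos hβ (hS_pos s hs.1)).le
  have hST := h.S_le_sub_integral hα₁ hu_meas hu le_rfl hT fun s hs => (hS_pos s hs.1).le
  have hμIT : μ * I 0 * T = S 0 := by simp only [T]; field_simp
  linarith [hS_pos T hT]

end IsLinTraj

theorem vaccination_unique_peak_time_general
    (β μ umax : ℝ)
    (hβ : 0 < β) (hμ : 0 < μ)
    (u S I : ℝ → ℝ)
    (hu_meas : Measurable u) (hu_range : ∀ t, u t ∈ Set.Icc 0 umax)
    (htraj : IsLinTraj β μ 1 0 u S I)
    (hI0 : 0 < I 0) :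
    ∃! tp : ℝ, 0 ≤ tp ∧
      (∀ t, 0 ≤ t → t < tp → 0 < derivWithin I (Set.Ici 0) t) ∧
      (∀ t, tp < t → derivWithin I (Set.Ici 0) t < 0) ∧
      (∀ t, 0 ≤ t → t < tp → μ < β * S t) ∧
      (∀ t, tp < t → β * S t < μ) := by
  have hI_pos : ∀ t, 0 ≤ t → 0 < I t := fun t ht => htraj.I_pos hI0 ht
  have hI' : ∀ t, 0 ≤ t → derivWithin I (Ici 0) t = (β * S t - μ) * I t := fun t ht =>
    (htraj.hasDerivWithinAt_I ht).derivWithin (uniqueDiffOn_Ici 0 t ht)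
  have hdec : StrictAntiWhilePos fun t => β * S t := fun a b ha hab hpos =>
    mul_lt_mul_of_pos_left (htraj.S_lt_of_pos zero_le_one hβ hu_meas hu_range ha hab
      (fun s hs => pos_of_mul_pos_right (hpos s hs) hβ.le)
      (fun s hs => hI_pos s (ha.trans hs.1))) hβ
  obtain ⟨tp, ⟨htp0, hbefore, hafter⟩, huniq⟩ :=
    hdec.existsUnique_threshold (continuousOn_const.mul htraj.1) hμ
      (htraj.exists_mul_S_le zero_le_one hβ hμ hu_meas hu_range hI0)
  refine ⟨tp, ⟨htp0, fun t ht htp => ?_, fun t htp => ?_, hbefore, hafter⟩,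
    fun q ⟨hq0, _, _, hq⟩ => huniq q ⟨hq0, hq⟩⟩
  · rw [hI' t ht]
    exact mul_pos (sub_pos.2 (hbefore t ht htp)) (hI_pos t ht)
  · have ht : 0 ≤ t := htp0.trans htp.le
    rw [hI' t ht]
    exact mul_neg_of_neg_of_pos (sub_neg.2 (hafter t htp)) (hI_pos t ht)

/-- Vaccination case `(α₁, α₂) = (1, 0)`: there is a unique peak time `t_p ≥ 0` such that
`I' > 0` on `[0, t_p)` and `I' < 0` on `(t_p, ∞)`; equivalently `βS(t) > μ` for `t < t_p`
and `βS(t) < μ` for `t > t_p`. -/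
theorem vaccination_unique_peak_time
    (β μ umax : ℝ)
    (hβ : 0 < β) (hμ : 0 < μ) (humax : 0 < umax)
    (u S I : ℝ → ℝ)
    (hu_meas : Measurable u) (hu_range : ∀ t, u t ∈ Set.Icc 0 umax)
    (htraj : IsLinTraj β μ 1 0 u S I)
    (hS0 : 0 < S 0) (hI0 : 0 < I 0) :
    ∃! tp : ℝ, 0 ≤ tp ∧
      (∀ t, 0 ≤ t → t < tp → 0 < derivWithin I (Set.Ici 0) t) ∧
      (∀ t, tp < t → derivWithin I (Set.Ici 0) t < 0) ∧
      (∀ t, 0 ≤ t → t < tp → μ < β * S t) ∧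
      (∀ t, tp < t → β * S t < μ) :=
  vaccination_unique_peak_time_general β μ umax hβ hμ u S I hu_meas hu_range htraj hI0
end

section
/- Let (S, I) be a trajectory of the controlled SIR system with linear control term on an interval with S(t) > 0 and I(t) > 0 throughout, and let (λ_S, λ_I) solve the adjoint system along this trajectory with (λ_S(t), λ_I(t)) ≠ (0, 0) for every t. Then every zero of the switching function ψ is isolated: at any time t₀ with ψ(t₀) = 0, the derivative ψ'(t₀) is nonzero. In particular, ψ cannot vanish identically on a nonempty open interval. -/
/-!
Along any trajectory the control terms cancel in `ψ'`, leaving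
`ψ' = β S I (α₁ λ_I - α₂ λ_S)`. So at a zero of `ψ` with `ψ' = 0` the costate solves a
homogeneous linear system with determinant `-(α₁² S + α₂² I) < 0`, forcing `λ_S = λ_I = 0`.
-/

open Set

def switchingFn (α₁ α₂ : ℝ) (S I lS lI : ℝ → ℝ) : ℝ → ℝ :=
  fun t => -(α₁ * S t * lS t) - α₂ * I t * lI t

theorem hasDerivAt_switchingFn {β μ α₁ α₂ t : ℝ} {u S I lS lI : ℝ → ℝ}
    (hS : HasDerivAt S (-(β * S t * I t) - α₁ * u t * S t) t)
    (hI : HasDerivAt I (β * S t * I t - μ * I t - α₂ * u t * I t) t)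
    (hlS : HasDerivAt lS ((lS t - lI t) * β * I t + α₁ * u t * lS t) t)
    (hlI : HasDerivAt lI ((lS t - lI t) * β * S t + μ * lI t + α₂ * u t * lI t) t) :
    HasDerivAt (switchingFn α₁ α₂ S I lS lI) (β * S t * I t * (α₁ * lI t - α₂ * lS t)) t := by
  refine (((hS.const_mul α₁).mul hlS).neg.sub ((hI.const_mul α₂).mul hlI)).congr_deriv ?_
  ring

theorem costate_eq_zero_of_switching_and_deriv_eq_zero {α₁ α₂ S I x y : ℝ}
    (hα : ¬(α₁ = 0 ∧ α₂ = 0)) (hS : 0 < S) (hI : 0 < I) (hψ : -(α₁ * S * x) - α₂ * I * y = 0)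
    (hψ' : α₁ * y - α₂ * x = 0) : x = 0 ∧ y = 0 := by
  have hdet : α₁ ^ 2 * S + α₂ ^ 2 * I ≠ 0 := by
    by_cases h₁ : α₁ = 0
    · have h₂ : α₂ ≠ 0 := fun h₂ => hα ⟨h₁, h₂⟩
      subst h₁
      simpa using ⟨h₂, hI.ne'⟩
    · have : 0 < α₁ ^ 2 * S := by positivity
      positivity
  constructor
  · refine (mul_eq_zero.1 (?_ : x * (α₁ ^ 2 * S + α₂ ^ 2 * I) = 0)).resolve_right hdet
    linear_combination (-α₁) * hψ - α₂ * I * hψ'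
  · refine (mul_eq_zero.1 (?_ : y * (α₁ ^ 2 * S + α₂ ^ 2 * I) = 0)).resolve_right hdet
    linear_combination α₁ * S * hψ' - α₂ * hψ

theorem linear_switching_function_zeros_isolated_general
    (β μ α₁ α₂ a b : ℝ)
    (hβ : 0 < β)
    (hα : ¬(α₁ = 0 ∧ α₂ = 0))
    (u S I lS lI : ℝ → ℝ)
    (hpos : ∀ t ∈ Set.Icc a b, 0 < S t ∧ 0 < I t)
    (hS : ∀ t ∈ Set.Icc a b,
      HasDerivAt S (-(β * S t * I t) - α₁ * u t * S t) t)
    (hI : ∀ t ∈ Set.Icc a b,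
      HasDerivAt I (β * S t * I t - μ * I t - α₂ * u t * I t) t)
    (hlS : ∀ t ∈ Set.Icc a b,
      HasDerivAt lS ((lS t - lI t) * β * I t + α₁ * u t * lS t) t)
    (hlI : ∀ t ∈ Set.Icc a b,
      HasDerivAt lI ((lS t - lI t) * β * S t + μ * lI t + α₂ * u t * lI t) t)
    (hlnz : ∀ t ∈ Set.Icc a b, ¬(lS t = 0 ∧ lI t = 0)) :
    (∀ t₀ ∈ Set.Icc a b, -(α₁ * S t₀ * lS t₀) - α₂ * I t₀ * lI t₀ = 0 →
      deriv (fun t => -(α₁ * S t * lS t) - α₂ * I t * lI t) t₀ ≠ 0) ∧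
    ∀ c d : ℝ, a ≤ c → c < d → d ≤ b →
      ¬(∀ t ∈ Set.Ioo c d, -(α₁ * S t * lS t) - α₂ * I t * lI t = 0) := by
  have zeros_simple : ∀ t₀ ∈ Icc a b, switchingFn α₁ α₂ S I lS lI t₀ = 0 →
      deriv (switchingFn α₁ α₂ S I lS lI) t₀ ≠ 0 := by
    intro t₀ ht₀ hψ hψ'
    obtain ⟨hSpos, hIpos⟩ := hpos t₀ ht₀
    rw [(hasDerivAt_switchingFn (hS t₀ ht₀) (hI t₀ ht₀) (hlS t₀ ht₀) (hlI t₀ ht₀)).deriv,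
      mul_eq_zero] at hψ'
    have hSI : β * S t₀ * I t₀ ≠ 0 := by positivity
    exact hlnz t₀ ht₀
      (costate_eq_zero_of_switching_and_deriv_eq_zero hα hSpos hIpos hψ (hψ'.resolve_left hSI))
  refine ⟨zeros_simple, fun c d hac hcd hdb hvanish => ?_⟩
  obtain ⟨t₀, ht₀⟩ := nonempty_Ioo.2 hcd
  have hψ' : deriv (switchingFn α₁ α₂ S I lS lI) t₀ = 0 :=
    (EqOn.deriv (g := fun _ => 0) hvanish isOpen_Ioo ht₀).trans (deriv_const t₀ 0)
  exact zeros_simple t₀ (Ioo_subset_Icc_self.trans (Icc_subset_Icc hac hdb) ht₀)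
    (hvanish t₀ ht₀) hψ'

/-- PMP for the linear-control SIR system: along a trajectory with `S, I > 0` and a nonzero
solution of the adjoint system, every zero of the switching function
`ψ = -α₁ S λS - α₂ I λI` is isolated (`ψ' ≠ 0` there); in particular `ψ` cannot vanish
identically on a nonempty open subinterval. -/
theorem linear_switching_function_zeros_isolated
    (β μ α₁ α₂ a b : ℝ)
    (hβ : 0 < β) (hμ : 0 < μ)
    (hα₁ : 0 ≤ α₁) (hα₂ : 0 ≤ α₂) (hα : ¬(α₁ = 0 ∧ α₂ = 0))
    (hab : a < b)
    (u S I lS lI : ℝ → ℝ)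
    (hpos : ∀ t ∈ Set.Icc a b, 0 < S t ∧ 0 < I t)
    (hS : ∀ t ∈ Set.Icc a b,
      HasDerivAt S (-(β * S t * I t) - α₁ * u t * S t) t)
    (hI : ∀ t ∈ Set.Icc a b,
      HasDerivAt I (β * S t * I t - μ * I t - α₂ * u t * I t) t)
    (hlS : ∀ t ∈ Set.Icc a b,
      HasDerivAt lS ((lS t - lI t) * β * I t + α₁ * u t * lS t) t)
    (hlI : ∀ t ∈ Set.Icc a b,
      HasDerivAt lI ((lS t - lI t) * β * S t + μ * lI t + α₂ * u t * lI t) t)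
    (hlnz : ∀ t ∈ Set.Icc a b, ¬(lS t = 0 ∧ lI t = 0)) :
    (∀ t₀ ∈ Set.Icc a b, -(α₁ * S t₀ * lS t₀) - α₂ * I t₀ * lI t₀ = 0 →
      deriv (fun t => -(α₁ * S t * lS t) - α₂ * I t * lI t) t₀ ≠ 0) ∧
    ∀ c d : ℝ, a ≤ c → c < d → d ≤ b →
      ¬(∀ t ∈ Set.Ioo c d, -(α₁ * S t * lS t) - α₂ * I t * lI t = 0) :=
  linear_switching_function_zeros_isolated_general β μ α₁ α₂ a b hβ hα u S I lS lI hpos hS hI hlS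
    hlI hlnz
end

section
/- Let (S, I) be a trajectory of the controlled SIR system with linear control term on [0, T] with S, I > 0 throughout, and let (λ_S, λ_I) solve the adjoint system along this trajectory. Assume the transversality condition λ_S(T) = 0, that the Hamiltonian vanishes at T, and that I'(T) < 0. Then λ_I(T) = −1/I'(T) > 0, and the switching function ψ is strictly negative on some left-neighborhood (T − δ, T) of T. -/
/-!
At the final time the transversality condition `λ_S(T) = 0` reduces the vanishing of the
Hamiltonian to `1 + I'(T) λ_I(T) = 0`, which gives `λ_I(T) = -1 / I'(T) > 0`. Hence
`ψ(T) = -α₂ I(T) λ_I(T)`. If `α₂ > 0` this is negative and continuity does the rest. If `α₂ = 0`,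
then `ψ = -α₁ S λ_S` vanishes at `T`, but the adjoint equation gives `λ_S'(T) = -β I(T) λ_I(T)`,
so `ψ'(T) = α₁ β S(T) I(T) λ_I(T) > 0` and `ψ` is negative just before `T`.
-/

open Set Filter Topology

theorem exists_pos_forall_Ioo_sub_of_eventually_nhdsLT {α : Type*} [AddCommGroup α]
    [LinearOrder α] [IsOrderedAddMonoid α] [TopologicalSpace α] [OrderTopology α]
    [NoMinOrder α] {a : α} {p : α → Prop} (h : ∀ᶠ x in 𝓝[<] a, p x) :
    ∃ δ > 0, ∀ x ∈ Ioo (a - δ) a, p x := by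
  obtain ⟨b, hba, hb⟩ := (nhdsLT_basis a).eventually_iff.mp h
  exact ⟨a - b, sub_pos.mpr hba, by rwa [sub_sub_cancel]⟩

theorem HasDerivAt.eventually_nhdsLT_neg_of_pos {f : ℝ → ℝ} {f' x : ℝ} (hf : HasDerivAt f f' x)
    (hf' : 0 < f') (hfx : f x = 0) : ∀ᶠ t in 𝓝[<] x, f t < 0 := by
  have hslope := hasDerivAt_iff_tendsto_slope.mp hf
  filter_upwards [nhdsLT_le_nhdsNE x (hslope.eventually (eventually_gt_nhds hf')),
    self_mem_nhdsWithin] with t hpos ht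
  exact neg_of_slope_pos ht hpos hfx

theorem hasDerivAt_switchingFunction_of_costate_eq_zero {β α₁ u T sT' : ℝ} {S I lS lI : ℝ → ℝ}
    (hS : HasDerivAt S sT' T)
    (hlS : HasDerivAt lS ((lS T - lI T) * β * I T + α₁ * u * lS T) T) (hlST : lS T = 0) :
    HasDerivAt (fun t => -(α₁ * S t * lS t)) (α₁ * β * S T * I T * lI T) T := by
  refine ((hS.const_mul α₁).mul hlS).neg.congr_deriv ?_
  rw [hlST]
  ring

theorem linear_switching_function_negative_near_final_time_general
    (β μ α₁ α₂ T : ℝ)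
    (hβ : 0 < β)
    (hα₁ : 0 ≤ α₁) (hα₂ : 0 ≤ α₂) (hα : ¬(α₁ = 0 ∧ α₂ = 0))
    (hT : 0 < T)
    (u S I lS lI : ℝ → ℝ)
    (hpos : ∀ t ∈ Set.Icc 0 T, 0 < S t ∧ 0 < I t)
    (hS : ∀ t ∈ Set.Icc 0 T,
      HasDerivAt S (-(β * S t * I t) - α₁ * u t * S t) t)
    (hI : ∀ t ∈ Set.Icc 0 T,
      HasDerivAt I (β * S t * I t - μ * I t - α₂ * u t * I t) t)
    (hlS : ∀ t ∈ Set.Icc 0 T,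
      HasDerivAt lS ((lS t - lI t) * β * I t + α₁ * u t * lS t) t)
    (hlI : ∀ t ∈ Set.Icc 0 T,
      HasDerivAt lI ((lS t - lI t) * β * S t + μ * lI t + α₂ * u t * lI t) t)
    (htrans : lS T = 0)
    (hH : 1 - (β * S T * I T + α₁ * u T * S T) * lS T
        + (β * S T * I T - μ * I T - α₂ * u T * I T) * lI T = 0)
    (hI'T : deriv I T < 0) :
    lI T = -1 / deriv I T ∧ 0 < lI T ∧
    ∃ δ > 0, ∀ t ∈ Set.Ioo (T - δ) T,
      -(α₁ * S t * lS t) - α₂ * I t * lI t < 0 := by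
  have hTmem : T ∈ Icc 0 T := ⟨hT.le, le_rfl⟩
  obtain ⟨hST, hIT⟩ := hpos T hTmem
  have hHamilton : 1 + deriv I T * lI T = 0 := by
    rw [(hI T hTmem).deriv]
    simpa [htrans] using hH
  have hlIT : lI T = -1 / deriv I T := by
    rw [eq_div_iff hI'T.ne]
    linarith
  have hlIpos : 0 < lI T := hlIT ▸ div_pos_of_neg_of_neg neg_one_lt_zero hI'T
  refine ⟨hlIT, hlIpos, exists_pos_forall_Ioo_sub_of_eventually_nhdsLT ?_⟩
  rcases hα₂.eq_or_lt with rfl | hα₂pos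
  · have hα₁pos : 0 < α₁ := hα₁.lt_of_ne fun h => hα ⟨h.symm, rfl⟩
    simp only [zero_mul, sub_zero]
    exact (hasDerivAt_switchingFunction_of_costate_eq_zero (hS T hTmem) (hlS T hTmem)
      htrans).eventually_nhdsLT_neg_of_pos (by positivity) (by simp [htrans])
  · have hψ : ContinuousAt (fun t => -(α₁ * S t * lS t) - α₂ * I t * lI t) T :=
      ((continuousAt_const.mul (hS T hTmem).continuousAt).mul (hlS T hTmem).continuousAt).neg.sub
        ((continuousAt_const.mul (hI T hTmem).continuousAt).mul (hlI T hTmem).continuousAt)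
    refine nhdsWithin_le_nhds (hψ.eventually_lt_const ?_)
    simp only [htrans, mul_zero, neg_zero, zero_sub, neg_lt_zero]
    positivity

/-- PMP for the linear-control SIR system: if the transversality condition `λS(T) = 0`
holds, the Hamiltonian vanishes at `T`, and `I'(T) < 0`, then `λI(T) = -1/I'(T) > 0`
and the switching function `ψ = -α₁ S λS - α₂ I λI` is strictly negative on a
left-neighborhood of `T`. -/
theorem linear_switching_function_negative_near_final_time
    (β μ α₁ α₂ T : ℝ)
    (hβ : 0 < β) (hμ : 0 < μ)
    (hα₁ : 0 ≤ α₁) (hα₂ : 0 ≤ α₂) (hα : ¬(α₁ = 0 ∧ α₂ = 0))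
    (hT : 0 < T)
    (u S I lS lI : ℝ → ℝ)
    (hpos : ∀ t ∈ Set.Icc 0 T, 0 < S t ∧ 0 < I t)
    (hS : ∀ t ∈ Set.Icc 0 T,
      HasDerivAt S (-(β * S t * I t) - α₁ * u t * S t) t)
    (hI : ∀ t ∈ Set.Icc 0 T,
      HasDerivAt I (β * S t * I t - μ * I t - α₂ * u t * I t) t)
    (hlS : ∀ t ∈ Set.Icc 0 T,
      HasDerivAt lS ((lS t - lI t) * β * I t + α₁ * u t * lS t) t)
    (hlI : ∀ t ∈ Set.Icc 0 T,
      HasDerivAt lI ((lS t - lI t) * β * S t + μ * lI t + α₂ * u t * lI t) t)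
    (htrans : lS T = 0)
    (hH : 1 - (β * S T * I T + α₁ * u T * S T) * lS T
        + (β * S T * I T - μ * I T - α₂ * u T * I T) * lI T = 0)
    (hI'T : deriv I T < 0) :
    lI T = -1 / deriv I T ∧ 0 < lI T ∧
    ∃ δ > 0, ∀ t ∈ Set.Ioo (T - δ) T,
      -(α₁ * S t * lS t) - α₂ * I t * lI t < 0 :=
  linear_switching_function_negative_near_final_time_general β μ α₁ α₂ T hβ hα₁ hα₂ hα hT u S I lS
    lI hpos hS hI hlS hlI htrans hH hI'T
end

section
/- Isolation case ((α₁, α₂) = (0, 1)): let (S, I) be a trajectory of the isolation-controlled SIR system on [0, T] with S, I > 0 throughout, let (λ_S, λ_I) solve the adjoint system along this trajectory, and assume the Hamiltonian H(t) is identically zero on [0, T]. Then at every time t₀ ∈ (0, T) where the switching function ψ(t) = −I(t)λ_I(t) vanishes, its derivative equals −1: ψ'(t₀) = −1. Consequently ψ has at most one zero in (0, T), and at such a zero ψ changes sign from positive to negative. -/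
/-!
Along an isolation-controlled trajectory the `μ` and `u` terms cancel in the derivative of the
switching function, leaving `ψ' = -β S I λ_S`. At a zero of `ψ` we have `λ_I = 0` (as `I > 0`),
and then `H = 0` reads `β S I λ_S = 1`, so `ψ' = -1`. A continuous function that crosses every
one of its zeros downwards can have only one zero, and it is positive before and negative after it.
-/

open Set Filter Topology

section DownwardZeros

variable {f : ℝ → ℝ} {a b c : ℝ}

lemma eventually_neg_nhdsGT_of_deriv_neg (hf : deriv f c < 0) (hc : f c = 0) :
    ∀ᶠ x in 𝓝[>] c, f x < 0 := by
  filter_upwards [nhdsWithin_le_nhds (eventually_nhdsWithin_sign_eq_of_deriv_neg hf hc),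
    self_mem_nhdsWithin] with x hx (hcx : c < x)
  rwa [← sign_eq_neg_one_iff, hx, sign_eq_neg_one_iff, sub_neg]

lemma eventually_pos_nhdsLT_of_deriv_neg (hf : deriv f c < 0) (hc : f c = 0) :
    ∀ᶠ x in 𝓝[<] c, 0 < f x := by
  filter_upwards [nhdsWithin_le_nhds (eventually_nhdsWithin_sign_eq_of_deriv_neg hf hc),
    self_mem_nhdsWithin] with x hx (hxc : x < c)
  rwa [← sign_eq_one_iff, hx, sign_eq_one_iff, sub_pos]

lemma exists_neg_mem_Ico_of_nonpos (hab : a < b) (ha : f a ≤ 0)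
    (hderiv : f a = 0 → deriv f a < 0) : ∃ s ∈ Ico a b, f s < 0 := by
  rcases ha.lt_or_eq with ha | ha
  · exact ⟨a, left_mem_Ico.2 hab, ha⟩
  · obtain ⟨s, hs, hs'⟩ :=
      ((eventually_neg_nhdsGT_of_deriv_neg (hderiv ha) ha).and (Ioo_mem_nhdsGT hab)).exists
    exact ⟨s, Ioo_subset_Ico_self hs', hs⟩

/-- The first zero of `f` in `[a, b]` would be approached from below, contradicting the
downward crossing there. -/
lemma neg_of_neg_of_deriv_neg_at_zeros (hab : a ≤ b) (hf : ContinuousOn f (Icc a b))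
    (ha : f a < 0) (hderiv : ∀ c ∈ Ioc a b, f c = 0 → deriv f c < 0) : f b < 0 := by
  by_contra! hb
  set Z := Icc a b ∩ f ⁻¹' {0}
  have hZ : Z.Nonempty := intermediate_value_Icc hab hf ⟨ha.le, hb⟩
  have hZ_bdd : BddBelow Z := ⟨a, fun x hx => hx.1.1⟩
  have hc : sInf Z ∈ Z :=
    (hf.preimage_isClosed_of_isClosed isClosed_Icc isClosed_singleton).csInf_mem hZ hZ_bdd
  have hac : a < sInf Z := hc.1.1.lt_of_ne fun h => ha.ne (h ▸ hc.2)
  obtain ⟨s, hs, has, hsc⟩ := ((eventually_pos_nhdsLT_of_deriv_neg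
    (hderiv _ ⟨hac, hc.1.2⟩ hc.2) hc.2).and (Ioo_mem_nhdsLT hac)).exists
  have hsub : Icc a s ⊆ Icc a b := Icc_subset_Icc_right (hsc.le.trans hc.1.2)
  obtain ⟨x, hx, hfx⟩ := intermediate_value_Icc has.le (hf.mono hsub) ⟨ha.le, hs.le⟩
  exact (csInf_le hZ_bdd ⟨hsub hx, hfx⟩).not_gt (hx.2.trans_lt hsc)

lemma sign_change_of_deriv_neg_at_zeros (hf : ContinuousOn f (Ioo a b))
    (hderiv : ∀ c ∈ Ioo a b, f c = 0 → deriv f c < 0) {t₀ : ℝ} (ht₀ : t₀ ∈ Ioo a b)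
    (h₀ : f t₀ = 0) : (∀ t ∈ Ioo a t₀, 0 < f t) ∧ (∀ t ∈ Ioo t₀ b, f t < 0) := by
  have key : ∀ s ∈ Ioo a b, ∀ t ∈ Ioo a b, s ≤ t → f s < 0 → f t < 0 := fun s hs t ht hst hfs =>
    neg_of_neg_of_deriv_neg_at_zeros hst (hf.mono (Icc_subset_Ioo hs.1 ht.2)) hfs
      fun c hc => hderiv c ⟨hs.1.trans hc.1, hc.2.trans_lt ht.2⟩
  constructor
  · intro t ht
    by_contra! hft
    have ht' : t ∈ Ioo a b := ⟨ht.1, ht.2.trans ht₀.2⟩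
    obtain ⟨s, hs, hfs⟩ := exists_neg_mem_Ico_of_nonpos ht.2 hft (hderiv t ht')
    exact (key s ⟨ht.1.trans_le hs.1, hs.2.trans ht₀.2⟩ t₀ ht₀ hs.2.le hfs).ne h₀
  · intro t ht
    obtain ⟨s, hs, hfs⟩ := exists_neg_mem_Ico_of_nonpos ht.1 h₀.le (hderiv t₀ ht₀)
    exact key s ⟨ht₀.1.trans_le hs.1, hs.2.trans ht.2⟩ t ⟨ht₀.1.trans ht.1, ht.2⟩
      hs.2.le hfs

lemma eq_of_deriv_neg_at_zeros (hf : ContinuousOn f (Ioo a b))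
    (hderiv : ∀ c ∈ Ioo a b, f c = 0 → deriv f c < 0) {t₀ t₁ : ℝ} (ht₀ : t₀ ∈ Ioo a b)
    (ht₁ : t₁ ∈ Ioo a b) (h₀ : f t₀ = 0) (h₁ : f t₁ = 0) : t₀ = t₁ := by
  rcases lt_trichotomy t₀ t₁ with h | h | h
  · exact absurd h₁ ((sign_change_of_deriv_neg_at_zeros hf hderiv ht₀ h₀).2 t₁ ⟨h, ht₁.2⟩).ne
  · exact h
  · exact absurd h₀ ((sign_change_of_deriv_neg_at_zeros hf hderiv ht₁ h₁).2 t₀ ⟨h, ht₀.2⟩).ne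

end DownwardZeros

section Isolation

variable {β μ t : ℝ} {u S I lS lI : ℝ → ℝ}

lemma isolation_hasDerivAt_switching
    (hI : HasDerivAt I (β * S t * I t - μ * I t - u t * I t) t)
    (hlI : HasDerivAt lI ((lS t - lI t) * β * S t + μ * lI t + u t * lI t) t) :
    HasDerivAt (fun t => -(I t * lI t)) (-(β * S t * I t * lS t)) t :=
  (hI.mul hlI).neg.congr_deriv (by ring)

lemma isolation_deriv_switching_eq_neg_one_of_eq_zero
    (hI : HasDerivAt I (β * S t * I t - μ * I t - u t * I t) t)
    (hlI : HasDerivAt lI ((lS t - lI t) * β * S t + μ * lI t + u t * lI t) t)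
    (hIpos : 0 < I t)
    (hH : 1 - (β * S t * I t) * lS t + (β * S t * I t - μ * I t - u t * I t) * lI t = 0)
    (hψ : -(I t * lI t) = 0) :
    deriv (fun t => -(I t * lI t)) t = -1 := by
  have hlI0 : lI t = 0 := (mul_eq_zero.1 (neg_eq_zero.1 hψ)).resolve_left hIpos.ne'
  rw [(isolation_hasDerivAt_switching hI hlI).deriv]
  rw [hlI0] at hH
  linarith

end Isolation

theorem isolation_switching_function_unique_zero_general
    (β μ T : ℝ)
    (u S I lS lI : ℝ → ℝ)
    (hpos : ∀ t ∈ Set.Icc 0 T, 0 < S t ∧ 0 < I t)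
    (hI : ∀ t ∈ Set.Icc 0 T,
      HasDerivAt I (β * S t * I t - μ * I t - u t * I t) t)
    (hlI : ∀ t ∈ Set.Icc 0 T,
      HasDerivAt lI ((lS t - lI t) * β * S t + μ * lI t + u t * lI t) t)
    (hH : ∀ t ∈ Set.Icc 0 T,
      1 - (β * S t * I t) * lS t + (β * S t * I t - μ * I t - u t * I t) * lI t = 0) :
    (∀ t₀ ∈ Set.Ioo 0 T, -(I t₀ * lI t₀) = 0 →
      deriv (fun t => -(I t * lI t)) t₀ = -1) ∧
    (∀ t₀ ∈ Set.Ioo 0 T, ∀ t₁ ∈ Set.Ioo 0 T,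
      -(I t₀ * lI t₀) = 0 → -(I t₁ * lI t₁) = 0 → t₀ = t₁) ∧
    (∀ t₀ ∈ Set.Ioo 0 T, -(I t₀ * lI t₀) = 0 →
      (∀ t ∈ Set.Ioo 0 t₀, 0 < -(I t * lI t)) ∧
      (∀ t ∈ Set.Ioo t₀ T, -(I t * lI t) < 0)) := by
  have hderiv : ∀ t ∈ Ioo 0 T, -(I t * lI t) = 0 → deriv (fun t => -(I t * lI t)) t = -1 :=
    fun t ht => isolation_deriv_switching_eq_neg_one_of_eq_zero (hI t (Ioo_subset_Icc_self ht))
      (hlI t (Ioo_subset_Icc_self ht)) (hpos t (Ioo_subset_Icc_self ht)).2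
      (hH t (Ioo_subset_Icc_self ht))
  have hcont : ContinuousOn (fun t => -(I t * lI t)) (Ioo 0 T) := fun t ht =>
    (isolation_hasDerivAt_switching (hI t (Ioo_subset_Icc_self ht))
      (hlI t (Ioo_subset_Icc_self ht))).continuousAt.continuousWithinAt
  have hneg : ∀ t ∈ Ioo 0 T, -(I t * lI t) = 0 → deriv (fun t => -(I t * lI t)) t < 0 :=
    fun t ht h => (hderiv t ht h).trans_lt (by norm_num)
  exact ⟨hderiv, fun t₀ ht₀ t₁ ht₁ => eq_of_deriv_neg_at_zeros hcont hneg ht₀ ht₁,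
    fun t₀ ht₀ => sign_change_of_deriv_neg_at_zeros hcont hneg ht₀⟩

/-- PMP for the isolation-controlled SIR system (`(α₁, α₂) = (0, 1)`): if the Hamiltonian
vanishes identically on `[0, T]`, then at every zero `t₀ ∈ (0, T)` of the switching
function `ψ(t) = -I(t)λI(t)` one has `ψ'(t₀) = -1`; consequently `ψ` has at most one zero
in `(0, T)`, and at such a zero `ψ` changes sign from positive to negative. -/
theorem isolation_switching_function_unique_zero
    (β μ T : ℝ)
    (hβ : 0 < β) (hμ : 0 < μ) (hT : 0 < T)
    (u S I lS lI : ℝ → ℝ)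
    (hpos : ∀ t ∈ Set.Icc 0 T, 0 < S t ∧ 0 < I t)
    (hS : ∀ t ∈ Set.Icc 0 T,
      HasDerivAt S (-(β * S t * I t)) t)
    (hI : ∀ t ∈ Set.Icc 0 T,
      HasDerivAt I (β * S t * I t - μ * I t - u t * I t) t)
    (hlS : ∀ t ∈ Set.Icc 0 T,
      HasDerivAt lS ((lS t - lI t) * β * I t) t)
    (hlI : ∀ t ∈ Set.Icc 0 T,
      HasDerivAt lI ((lS t - lI t) * β * S t + μ * lI t + u t * lI t) t)
    (hH : ∀ t ∈ Set.Icc 0 T,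
      1 - (β * S t * I t) * lS t + (β * S t * I t - μ * I t - u t * I t) * lI t = 0) :
    (∀ t₀ ∈ Set.Ioo 0 T, -(I t₀ * lI t₀) = 0 →
      deriv (fun t => -(I t * lI t)) t₀ = -1) ∧
    (∀ t₀ ∈ Set.Ioo 0 T, ∀ t₁ ∈ Set.Ioo 0 T,
      -(I t₀ * lI t₀) = 0 → -(I t₁ * lI t₁) = 0 → t₀ = t₁) ∧
    (∀ t₀ ∈ Set.Ioo 0 T, -(I t₀ * lI t₀) = 0 →
      (∀ t ∈ Set.Ioo 0 t₀, 0 < -(I t * lI t)) ∧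
      (∀ t ∈ Set.Ioo t₀ T, -(I t * lI t) < 0)) :=
  isolation_switching_function_unique_zero_general β μ T u S I lS lI hpos hI hlI hH
end

section
/- Let (S, I) be a trajectory of the controlled SIR system with reduction-of-transmission control on [0, T] with S, I > 0 throughout, let (λ_S, λ_I) solve the adjoint system along this trajectory, and assume the Hamiltonian H(t) is identically zero on [0, T]. Then at every time t₀ where the switching function ψ vanishes, one has λ_S(t₀) = λ_I(t₀) = 1/(μ I(t₀)) and ψ'(t₀) = −βS(t₀) < 0. Consequently ψ has at most one zero in (0, T), and at such a zero ψ changes sign from positive to negative. -/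
open Set

/-!
Write `ψ = β I g` with `g = (λS - λI) S`. Eliminating `μ λI` by means of `H = 0`, the control
terms in `g'` cancel and `g' = -S / I < 0`. Hence `g`, which has the sign of `ψ`, is strictly
decreasing: it vanishes at most once and passes from positive to negative there. At a zero of
`ψ` we have `g = 0`, so `ψ' = β I g' = -β S`, and `H = 0` reduces to `μ I λI = 1`.
-/

section

variable {β μ : ℝ} {u S I lS lI : ℝ → ℝ} {t : ℝ}

theorem hasDerivAt_costate_sub_mul_of_hamiltonian_eq_zero (hIt : I t ≠ 0)
    (hS : HasDerivAt S (-(β * (1 - u t) * S t * I t)) t)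
    (hlS : HasDerivAt lS ((lS t - lI t) * β * (1 - u t) * I t) t)
    (hlI : HasDerivAt lI ((lS t - lI t) * β * (1 - u t) * S t + μ * lI t) t)
    (hH : 1 + (lI t - lS t) * β * (1 - u t) * S t * I t - μ * I t * lI t = 0) :
    HasDerivAt (fun s => (lS s - lI s) * S s) (-(S t / I t)) t := by
  refine ((hlS.sub hlI).mul hS).congr_deriv ?_
  simp only [Pi.sub_apply]
  field_simp
  linear_combination S t * hH

theorem strictAntiOn_costate_sub_mul {s : Set ℝ} (hs : Convex ℝ s)
    (hpos : ∀ t ∈ s, 0 < S t ∧ 0 < I t)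
    (hS : ∀ t ∈ s, HasDerivAt S (-(β * (1 - u t) * S t * I t)) t)
    (hlS : ∀ t ∈ s, HasDerivAt lS ((lS t - lI t) * β * (1 - u t) * I t) t)
    (hlI : ∀ t ∈ s, HasDerivAt lI ((lS t - lI t) * β * (1 - u t) * S t + μ * lI t) t)
    (hH : ∀ t ∈ s, 1 + (lI t - lS t) * β * (1 - u t) * S t * I t - μ * I t * lI t = 0) :
    StrictAntiOn (fun t => (lS t - lI t) * S t) s := by
  have hg : ∀ t ∈ s, HasDerivAt (fun s => (lS s - lI s) * S s) (-(S t / I t)) t := fun t ht =>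
    hasDerivAt_costate_sub_mul_of_hamiltonian_eq_zero (hpos t ht).2.ne'
      (hS t ht) (hlS t ht) (hlI t ht) (hH t ht)
  refine strictAntiOn_of_hasDerivWithinAt_neg hs
    (fun t ht => (hg t ht).continuousAt.continuousWithinAt)
    (fun t ht => (hg t (interior_subset ht)).hasDerivWithinAt) fun t ht => ?_
  obtain ⟨hSt, hIt⟩ := hpos t (interior_subset ht)
  exact neg_neg_of_pos (div_pos hSt hIt)

theorem switching_eq_mul_costate_sub_mul :
    (lS t - lI t) * β * S t * I t = β * I t * ((lS t - lI t) * S t) := by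
  ring

theorem costate_sub_mul_eq_zero_of_switching_eq_zero (hβ : β ≠ 0) (hIt : I t ≠ 0)
    (hψ : (lS t - lI t) * β * S t * I t = 0) : (lS t - lI t) * S t = 0 := by
  rw [switching_eq_mul_costate_sub_mul] at hψ
  exact (mul_eq_zero.1 hψ).resolve_left (mul_ne_zero hβ hIt)

theorem costate_sub_eq_zero_of_switching_eq_zero (hβ : β ≠ 0) (hSt : S t ≠ 0) (hIt : I t ≠ 0)
    (hψ : (lS t - lI t) * β * S t * I t = 0) : lS t - lI t = 0 :=
  (mul_eq_zero.1 (costate_sub_mul_eq_zero_of_switching_eq_zero hβ hIt hψ)).resolve_right hSt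

theorem costates_eq_inv_of_switching_eq_zero (hβ : β ≠ 0) (hSt : S t ≠ 0) (hIt : I t ≠ 0)
    (hH : 1 + (lI t - lS t) * β * (1 - u t) * S t * I t - μ * I t * lI t = 0)
    (hψ : (lS t - lI t) * β * S t * I t = 0) :
    lS t = 1 / (μ * I t) ∧ lI t = 1 / (μ * I t) := by
  have hgap := costate_sub_eq_zero_of_switching_eq_zero hβ hSt hIt hψ
  have hlI : lI t = 1 / (μ * I t) :=
    eq_one_div_of_mul_eq_one_right (by linear_combination -(hgap * β * (1 - u t) * S t * I t) - hH)
  exact ⟨by linarith, hlI⟩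

/-- At a zero of `ψ` only the `g'` term of `ψ' = (β I g)'` survives. -/
theorem hasDerivAt_switching_of_switching_eq_zero {I' : ℝ} (hβ : β ≠ 0) (hIt : I t ≠ 0)
    (hS : HasDerivAt S (-(β * (1 - u t) * S t * I t)) t) (hI : HasDerivAt I I' t)
    (hlS : HasDerivAt lS ((lS t - lI t) * β * (1 - u t) * I t) t)
    (hlI : HasDerivAt lI ((lS t - lI t) * β * (1 - u t) * S t + μ * lI t) t)
    (hH : 1 + (lI t - lS t) * β * (1 - u t) * S t * I t - μ * I t * lI t = 0)
    (hψ : (lS t - lI t) * β * S t * I t = 0) :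
    HasDerivAt (fun s => (lS s - lI s) * β * S s * I s) (-(β * S t)) t := by
  have hg₀ := costate_sub_mul_eq_zero_of_switching_eq_zero hβ hIt hψ
  have hg := hasDerivAt_costate_sub_mul_of_hamiltonian_eq_zero hIt hS hlS hlI hH
  refine ((hg.const_mul β).mul hI).congr_of_eventuallyEq
    (Filter.Eventually.of_forall fun s => by simp only [Pi.mul_apply]; ring) |>.congr_deriv ?_
  rw [hg₀]
  field_simp
  ring

end

theorem reduction_switching_function_unique_zero_general
    (β μ T : ℝ)
    (hβ : 0 < β)
    (u S I lS lI : ℝ → ℝ)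
    (hpos : ∀ t ∈ Set.Icc 0 T, 0 < S t ∧ 0 < I t)
    (hS : ∀ t ∈ Set.Icc 0 T,
      HasDerivAt S (-(β * (1 - u t) * S t * I t)) t)
    (hI : ∀ t ∈ Set.Icc 0 T,
      HasDerivAt I (β * (1 - u t) * S t * I t - μ * I t) t)
    (hlS : ∀ t ∈ Set.Icc 0 T,
      HasDerivAt lS ((lS t - lI t) * β * (1 - u t) * I t) t)
    (hlI : ∀ t ∈ Set.Icc 0 T,
      HasDerivAt lI ((lS t - lI t) * β * (1 - u t) * S t + μ * lI t) t)
    (hH : ∀ t ∈ Set.Icc 0 T,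
      1 + (lI t - lS t) * β * (1 - u t) * S t * I t - μ * I t * lI t = 0) :
    (∀ t₀ ∈ Set.Icc 0 T, (lS t₀ - lI t₀) * β * S t₀ * I t₀ = 0 →
      lS t₀ = 1 / (μ * I t₀) ∧ lI t₀ = 1 / (μ * I t₀) ∧
      deriv (fun t => (lS t - lI t) * β * S t * I t) t₀ = -(β * S t₀) ∧
      deriv (fun t => (lS t - lI t) * β * S t * I t) t₀ < 0) ∧
    (∀ t₀ ∈ Set.Ioo 0 T, ∀ t₁ ∈ Set.Ioo 0 T,
      (lS t₀ - lI t₀) * β * S t₀ * I t₀ = 0 → (lS t₁ - lI t₁) * β * S t₁ * I t₁ = 0 →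
      t₀ = t₁) ∧
    (∀ t₀ ∈ Set.Ioo 0 T, (lS t₀ - lI t₀) * β * S t₀ * I t₀ = 0 →
      (∀ t ∈ Set.Ioo 0 t₀, 0 < (lS t - lI t) * β * S t * I t) ∧
      (∀ t ∈ Set.Ioo t₀ T, (lS t - lI t) * β * S t * I t < 0)) := by
  have hg := strictAntiOn_costate_sub_mul (convex_Icc 0 T) hpos hS hlS hlI hH
  have hg_zero (t : ℝ) (ht : t ∈ Ioo 0 T) (hψ : (lS t - lI t) * β * S t * I t = 0) :
      (lS t - lI t) * S t = 0 :=
    costate_sub_mul_eq_zero_of_switching_eq_zero hβ.ne' (hpos t (Ioo_subset_Icc_self ht)).2.ne' hψ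
  refine ⟨fun t₀ ht₀ hψ => ?_, fun t₀ ht₀ t₁ ht₁ hψ₀ hψ₁ => ?_, fun t₀ ht₀ hψ => ⟨?_, ?_⟩⟩
  · obtain ⟨hSt, hIt⟩ := hpos t₀ ht₀
    obtain ⟨hlS₀, hlI₀⟩ :=
      costates_eq_inv_of_switching_eq_zero hβ.ne' hSt.ne' hIt.ne' (hH t₀ ht₀) hψ
    have hderiv := (hasDerivAt_switching_of_switching_eq_zero hβ.ne' hIt.ne' (hS t₀ ht₀)
      (hI t₀ ht₀) (hlS t₀ ht₀) (hlI t₀ ht₀) (hH t₀ ht₀) hψ).deriv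
    exact ⟨hlS₀, hlI₀, hderiv, hderiv ▸ neg_neg_of_pos (mul_pos hβ hSt)⟩
  · exact hg.injOn (Ioo_subset_Icc_self ht₀) (Ioo_subset_Icc_self ht₁)
      ((hg_zero t₀ ht₀ hψ₀).trans (hg_zero t₁ ht₁ hψ₁).symm)
  all_goals
    have hg₀ := hg_zero t₀ ht₀ hψ
    have ht₀' := Ioo_subset_Icc_self ht₀
    intro t ht
    rw [switching_eq_mul_costate_sub_mul]
  · have ht' : t ∈ Icc 0 T := ⟨ht.1.le, ht.2.le.trans ht₀'.2⟩
    exact mul_pos (mul_pos hβ (hpos t ht').2) (hg₀ ▸ hg ht' ht₀' ht.2)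
  · have ht' : t ∈ Icc 0 T := ⟨ht₀'.1.trans ht.1.le, ht.2.le⟩
    exact mul_neg_of_pos_of_neg (mul_pos hβ (hpos t ht').2) (hg₀ ▸ hg ht₀' ht' ht.1)

/-- PMP for the reduction-of-transmission SIR system: if the Hamiltonian vanishes
identically on `[0, T]`, then at every zero `t₀` of the switching function
`ψ(t) = (λS(t) - λI(t))βS(t)I(t)` one has `λS(t₀) = λI(t₀) = 1/(μ I(t₀))` and
`ψ'(t₀) = -βS(t₀) < 0`; consequently `ψ` has at most one zero in `(0, T)`, and at such
a zero `ψ` changes sign from positive to negative. -/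
theorem reduction_switching_function_unique_zero
    (β μ umax T : ℝ)
    (hβ : 0 < β) (hμ : 0 < μ) (humax : 0 < umax) (humax1 : umax ≤ 1) (hT : 0 < T)
    (u S I lS lI : ℝ → ℝ)
    (hu_range : ∀ t, u t ∈ Set.Icc 0 umax)
    (hpos : ∀ t ∈ Set.Icc 0 T, 0 < S t ∧ 0 < I t)
    (hS : ∀ t ∈ Set.Icc 0 T,
      HasDerivAt S (-(β * (1 - u t) * S t * I t)) t)
    (hI : ∀ t ∈ Set.Icc 0 T,
      HasDerivAt I (β * (1 - u t) * S t * I t - μ * I t) t)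
    (hlS : ∀ t ∈ Set.Icc 0 T,
      HasDerivAt lS ((lS t - lI t) * β * (1 - u t) * I t) t)
    (hlI : ∀ t ∈ Set.Icc 0 T,
      HasDerivAt lI ((lS t - lI t) * β * (1 - u t) * S t + μ * lI t) t)
    (hH : ∀ t ∈ Set.Icc 0 T,
      1 + (lI t - lS t) * β * (1 - u t) * S t * I t - μ * I t * lI t = 0) :
    (∀ t₀ ∈ Set.Icc 0 T, (lS t₀ - lI t₀) * β * S t₀ * I t₀ = 0 →
      lS t₀ = 1 / (μ * I t₀) ∧ lI t₀ = 1 / (μ * I t₀) ∧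
      deriv (fun t => (lS t - lI t) * β * S t * I t) t₀ = -(β * S t₀) ∧
      deriv (fun t => (lS t - lI t) * β * S t * I t) t₀ < 0) ∧
    (∀ t₀ ∈ Set.Ioo 0 T, ∀ t₁ ∈ Set.Ioo 0 T,
      (lS t₀ - lI t₀) * β * S t₀ * I t₀ = 0 → (lS t₁ - lI t₁) * β * S t₁ * I t₁ = 0 →
      t₀ = t₁) ∧
    (∀ t₀ ∈ Set.Ioo 0 T, (lS t₀ - lI t₀) * β * S t₀ * I t₀ = 0 →
      (∀ t ∈ Set.Ioo 0 t₀, 0 < (lS t - lI t) * β * S t * I t) ∧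
      (∀ t ∈ Set.Ioo t₀ T, (lS t - lI t) * β * S t * I t < 0)) :=
  reduction_switching_function_unique_zero_general β μ T hβ u S I lS lI hpos hS hI hlS hlI hH
end

section
/- Vaccination case ((α₁, α₂) = (1, 0)): let (S, I) be a trajectory of the vaccination-controlled SIR system on [0, T] with S, I > 0 throughout and control u = u(·;τ_s) for some 0 < τ_s < T, and let (λ_S, λ_I) solve the adjoint system on [τ_s, T] with the Hamiltonian identically zero, λ_S(T) = 0, ψ(τ_s) = 0, and ψ < 0 on (τ_s, T), where ψ(t) = −S(t)λ_S(t). Then: (i) ψ has exactly one critical point m_ψ in (τ_s, T), which is a minimum, and there λ_I(m_ψ) = 0 < λ_S(m_ψ); (ii) λ_S is positive on (τ_s, T), vanishes at τ_s and T, and has a unique maximum point M in (τ_s, T), at which λ_I(M) = 1/(μ I(M)) and λ_S(M) = βI(M)λ_I(M)/(βI(M) + u_max) < λ_I(M); (iii) m_ψ < M. -/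
/-!
On the arc `(τs, T)` where `u ≡ umax`, one computes `ψ' = βSIλI`, `λI' = βSλS > 0` wherever
`λI = 0`, and `λS'' = -βμIλS < 0` wherever `λS' = 0`. A function whose derivative is positive
at each of its zeros has at most one zero, where it changes sign from `-` to `+`. Hence `λI`
vanishes only at the minimum point `m` of `ψ`, and `λS'` only at the maximum point `M` of `λS`;
both extrema are interior because `ψ` and `λS` vanish at `τs` and `T`. At `M` the Hamiltonian
reduces to `1 - μIλI = 0`, so `λI(M) > 0` and `M` lies to the right of `m`.
-/

open Set

open Filter Topology

theorem exists_mem_Ioo_isMaxOn_of_pos {f : ℝ → ℝ} {a b : ℝ} (hf : ContinuousOn f (Icc a b))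
    (ha : f a = 0) (hb : f b = 0) (hpos : ∃ x ∈ Ioo a b, 0 < f x) :
    ∃ c ∈ Ioo a b, IsMaxOn f (Icc a b) c := by
  obtain ⟨x, hx, hfx⟩ := hpos
  obtain ⟨c, hc, hmax⟩ :=
    isCompact_Icc.exists_isMaxOn (nonempty_Icc.2 (hx.1.trans hx.2).le) hf
  have hfc : 0 < f c := hfx.trans_le (hmax (Ioo_subset_Icc_self hx))
  refine ⟨c, ⟨hc.1.lt_of_ne ?_, hc.2.lt_of_ne ?_⟩, hmax⟩ <;> rintro rfl <;> simp_all

theorem hasDerivAt_of_hasDerivWithinAt_Icc {f f' : ℝ → ℝ} {a b : ℝ}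
    (hf : ∀ t ∈ Icc a b, HasDerivWithinAt f (f' t) (Icc a b) t) :
    ∀ t ∈ Ioo a b, HasDerivAt f (f' t) t :=
  fun t ht => (hf t (Ioo_subset_Icc_self ht)).hasDerivAt (Icc_mem_nhds ht.1 ht.2)

section ZerosWithPositiveDerivative

variable {f : ℝ → ℝ} {a b c x : ℝ}

theorem pos_right_of_deriv_pos_at_zeros (hf : DifferentiableOn ℝ f (Ioo a b))
    (hf' : ∀ y ∈ Ioo a b, f y = 0 → 0 < deriv f y) (hac : a < c) (hfc : f c = 0) (hcx : c < x)
    (hxb : x < b) : 0 < f x := by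
  have hsub : Icc c x ⊆ Ioo a b := Icc_subset_Ioo hac hxb
  have hsign : ∀ y ∈ Icc c x, f y = 0 →
      ∀ᶠ z in 𝓝 y, SignType.sign (f z) = SignType.sign (z - y) :=
    fun y hy hy0 => eventually_nhdsWithin_sign_eq_of_deriv_pos (hf' y (hsub hy) hy0) hy0
  have hnonneg : Icc c x ⊆ {y | 0 ≤ f y} := by
    refine IsClosed.Icc_subset_of_forall_mem_nhdsWithin ?_ hfc.ge ?_
    · rw [inter_comm]
      exact (hf.continuousOn.mono hsub).preimage_isClosed_of_isClosed isClosed_Icc isClosed_Ici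
    · rintro y ⟨hy0 : 0 ≤ f y, hy⟩
      rcases hy0.eq_or_lt with hy0 | hy0
      · filter_upwards [nhdsWithin_le_nhds (hsign y (Ico_subset_Icc_self hy) hy0.symm),
          self_mem_nhdsWithin] with z hz (hyz : y < z)
        rw [sign_pos (sub_pos.2 hyz), sign_eq_one_iff] at hz
        exact hz.le
      · have hcont := (hf.differentiableAt
          (isOpen_Ioo.mem_nhds (hsub (Ico_subset_Icc_self hy)))).continuousAt
        exact mem_nhdsWithin_of_mem_nhds (hcont.eventually (le_mem_nhds hy0))
  refine (hnonneg (right_mem_Icc.2 hcx.le)).lt_of_ne fun hx0 => ?_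
  obtain ⟨z, hz, hzI⟩ := (((hsign x (right_mem_Icc.2 hcx.le) hx0.symm).filter_mono
    nhdsWithin_le_nhds).and (Ioo_mem_nhdsLT hcx)).exists
  rw [sign_neg (sub_neg.2 hzI.2), sign_eq_neg_one_iff] at hz
  exact hz.not_ge (hnonneg (Ioo_subset_Icc_self hzI))

theorem neg_left_of_deriv_pos_at_zeros (hf : DifferentiableOn ℝ f (Ioo a b))
    (hf' : ∀ y ∈ Ioo a b, f y = 0 → 0 < deriv f y) (hcb : c < b) (hfc : f c = 0) (hxc : x < c)
    (hax : a < x) : f x < 0 := by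
  have hneg : ∀ {y}, y ∈ Ioo (-b) (-a) → -y ∈ Ioo a b :=
    fun hy => ⟨lt_neg_of_lt_neg hy.2, neg_lt.1 hy.1⟩
  have hmirror : DifferentiableOn ℝ (fun z => -f (-z)) (Ioo (-b) (-a)) := fun y hy =>
    ((hf.differentiableAt (Ioo_mem_nhds (hneg hy).1 (hneg hy).2)).comp y
      differentiableAt_id.neg).neg.differentiableWithinAt
  simpa using pos_right_of_deriv_pos_at_zeros hmirror
    (fun y hy hy0 => by simpa [deriv_comp_neg] using hf' (-y) (hneg hy) (neg_eq_zero.1 hy0))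
    (neg_lt_neg hcb) (by simpa using hfc) (neg_lt_neg hxc) (neg_lt_neg hax)

theorem eq_of_deriv_pos_at_zeros (hf : DifferentiableOn ℝ f (Ioo a b))
    (hf' : ∀ y ∈ Ioo a b, f y = 0 → 0 < deriv f y) (hc : c ∈ Ioo a b) (hx : x ∈ Ioo a b)
    (hfc : f c = 0) (hfx : f x = 0) : x = c := by
  rcases lt_trichotomy x c with hxc | hxc | hxc
  · exact absurd hfx (neg_left_of_deriv_pos_at_zeros hf hf' hc.2 hfc hxc hx.1).ne
  · exact hxc
  · exact absurd hfx (pos_right_of_deriv_pos_at_zeros hf hf' hc.1 hfc hxc hx.2).ne'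

end ZerosWithPositiveDerivative

/-- An extremal of the vaccination problem on an open arc `(a, b)` of maximal control
`u ≡ umax`; `0 < lS` is the condition `ψ = -S λS < 0` given `S > 0`. -/
structure IsVaccinationExtremal (β μ umax a b : ℝ) (S I lS lI : ℝ → ℝ) : Prop where
  S_pos : ∀ t ∈ Ioo a b, 0 < S t
  I_pos : ∀ t ∈ Ioo a b, 0 < I t
  lS_pos : ∀ t ∈ Ioo a b, 0 < lS t
  hasDerivAt_S : ∀ t ∈ Ioo a b, HasDerivAt S (-(β * S t * I t) - umax * S t) t
  hasDerivAt_I : ∀ t ∈ Ioo a b, HasDerivAt I (β * S t * I t - μ * I t) t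
  hasDerivAt_lS : ∀ t ∈ Ioo a b, HasDerivAt lS ((lS t - lI t) * β * I t + umax * lS t) t
  hasDerivAt_lI : ∀ t ∈ Ioo a b, HasDerivAt lI ((lS t - lI t) * β * S t + μ * lI t) t
  hamiltonian_eq_zero : ∀ t ∈ Ioo a b,
    1 - (β * S t * I t + umax * S t) * lS t + (β * S t * I t - μ * I t) * lI t = 0

namespace IsVaccinationExtremal

variable {β μ umax a b t m M : ℝ} {S I lS lI : ℝ → ℝ}

theorem hasDerivAt_switching (h : IsVaccinationExtremal β μ umax a b S I lS lI)
    (ht : t ∈ Ioo a b) : HasDerivAt (fun t => -(S t * lS t)) (β * S t * I t * lI t) t :=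
  ((h.hasDerivAt_S t ht).mul (h.hasDerivAt_lS t ht)).neg.congr_deriv (by ring)

theorem lI_eq_zero_of_deriv_switching_eq_zero (h : IsVaccinationExtremal β μ umax a b S I lS lI)
    (hβ : 0 < β) (ht : t ∈ Ioo a b) (hd : deriv (fun t => -(S t * lS t)) t = 0) : lI t = 0 := by
  rw [(h.hasDerivAt_switching ht).deriv] at hd
  have := h.S_pos t ht
  have := h.I_pos t ht
  exact (mul_eq_zero.1 hd).resolve_left (by positivity)

theorem deriv_lI_pos_of_lI_eq_zero (h : IsVaccinationExtremal β μ umax a b S I lS lI)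
    (hβ : 0 < β) : ∀ t ∈ Ioo a b, lI t = 0 → 0 < deriv lI t := by
  intro t ht hlI
  rw [(h.hasDerivAt_lI t ht).deriv, hlI]
  have := h.S_pos t ht
  have := h.lS_pos t ht
  simp only [sub_zero, mul_zero, add_zero]
  positivity

theorem differentiableOn_lI (h : IsVaccinationExtremal β μ umax a b S I lS lI) :
    DifferentiableOn ℝ lI (Ioo a b) :=
  fun t ht => (h.hasDerivAt_lI t ht).differentiableAt.differentiableWithinAt

theorem eq_of_lI_eq_zero (h : IsVaccinationExtremal β μ umax a b S I lS lI) (hβ : 0 < β)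
    (hm : m ∈ Ioo a b) (ht : t ∈ Ioo a b) (hm0 : lI m = 0) (ht0 : lI t = 0) : t = m :=
  eq_of_deriv_pos_at_zeros h.differentiableOn_lI (h.deriv_lI_pos_of_lI_eq_zero hβ) hm ht hm0 ht0

theorem lt_of_lI_eq_zero_of_lI_pos (h : IsVaccinationExtremal β μ umax a b S I lS lI)
    (hβ : 0 < β) (hm : m ∈ Ioo a b) (hM : M ∈ Ioo a b) (hm0 : lI m = 0) (hM0 : 0 < lI M) :
    m < M := by
  refine lt_of_not_ge fun hMm => ?_
  rcases hMm.eq_or_lt with rfl | hMm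
  · exact hM0.ne' hm0
  · exact hM0.not_gt (neg_left_of_deriv_pos_at_zeros h.differentiableOn_lI
      (h.deriv_lI_pos_of_lI_eq_zero hβ) hm.2 hm0 hMm hM.1)

theorem deriv_lS_eq_zero_of_isLocalMax (h : IsVaccinationExtremal β μ umax a b S I lS lI)
    (ht : t ∈ Ioo a b) (hmax : IsLocalMax lS t) :
    (lS t - lI t) * β * I t + umax * lS t = 0 :=
  hmax.hasDerivAt_eq_zero (h.hasDerivAt_lS t ht)

theorem hasDerivAt_neg_deriv_lS (h : IsVaccinationExtremal β μ umax a b S I lS lI)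
    (ht : t ∈ Ioo a b) (hg : (lS t - lI t) * β * I t + umax * lS t = 0) :
    HasDerivAt (fun t => -((lS t - lI t) * β * I t + umax * lS t)) (β * μ * I t * lS t) t := by
  have hderiv := ((((h.hasDerivAt_lS t ht).sub (h.hasDerivAt_lI t ht)).mul_const β).mul
    (h.hasDerivAt_I t ht)).add ((h.hasDerivAt_lS t ht).const_mul umax) |>.neg
  exact hderiv.congr_deriv <| by
    simp only [Pi.sub_apply]
    linear_combination (-(β * I t + umax)) * hg

theorem eq_of_isLocalMax_lS (h : IsVaccinationExtremal β μ umax a b S I lS lI)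
    (hβ : 0 < β) (hμ : 0 < μ) (hM : M ∈ Ioo a b) (ht : t ∈ Ioo a b)
    (hM_max : IsLocalMax lS M) (ht_max : IsLocalMax lS t) : t = M := by
  refine eq_of_deriv_pos_at_zeros (f := fun t => -((lS t - lI t) * β * I t + umax * lS t))
    (fun y hy => ?_) (fun y hy hy0 => ?_) hM ht ?_ ?_
  · have := (h.hasDerivAt_lS y hy).differentiableAt
    have := (h.hasDerivAt_lI y hy).differentiableAt
    have := (h.hasDerivAt_I y hy).differentiableAt
    exact DifferentiableAt.differentiableWithinAt (by fun_prop)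
  · rw [(h.hasDerivAt_neg_deriv_lS hy (neg_eq_zero.1 hy0)).deriv]
    have := h.I_pos y hy
    have := h.lS_pos y hy
    positivity
  · simp [h.deriv_lS_eq_zero_of_isLocalMax hM hM_max]
  · simp [h.deriv_lS_eq_zero_of_isLocalMax ht ht_max]

theorem lI_eq_of_isLocalMax_lS (h : IsVaccinationExtremal β μ umax a b S I lS lI)
    (hμ : 0 < μ) (ht : t ∈ Ioo a b) (hmax : IsLocalMax lS t) : lI t = 1 / (μ * I t) := by
  have := h.I_pos t ht
  rw [eq_div_iff (by positivity)]
  linear_combination (-1 : ℝ) * h.hamiltonian_eq_zero t ht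
    - S t * h.deriv_lS_eq_zero_of_isLocalMax ht hmax

theorem lI_pos_of_isLocalMax_lS (h : IsVaccinationExtremal β μ umax a b S I lS lI)
    (hμ : 0 < μ) (ht : t ∈ Ioo a b) (hmax : IsLocalMax lS t) : 0 < lI t := by
  have := h.I_pos t ht
  rw [h.lI_eq_of_isLocalMax_lS hμ ht hmax]
  positivity

theorem lS_eq_of_isLocalMax_lS (h : IsVaccinationExtremal β μ umax a b S I lS lI)
    (hβ : 0 < β) (humax : 0 ≤ umax) (ht : t ∈ Ioo a b) (hmax : IsLocalMax lS t) :
    lS t = β * I t * lI t / (β * I t + umax) := by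
  have := h.I_pos t ht
  rw [eq_div_iff (by positivity)]
  linear_combination h.deriv_lS_eq_zero_of_isLocalMax ht hmax

theorem lS_lt_lI_of_isLocalMax_lS (h : IsVaccinationExtremal β μ umax a b S I lS lI)
    (hβ : 0 < β) (hμ : 0 < μ) (humax : 0 < umax) (ht : t ∈ Ioo a b) (hmax : IsLocalMax lS t) :
    lS t < lI t := by
  have := h.I_pos t ht
  have hlI := h.lI_pos_of_isLocalMax_lS hμ ht hmax
  rw [h.lS_eq_of_isLocalMax_lS hβ humax.le ht hmax, div_lt_iff₀ (by positivity)]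
  nlinarith [mul_pos humax hlI]

end IsVaccinationExtremal

theorem vaccination_delayed_extremal_structure_general
    (β μ umax τs T : ℝ)
    (hβ : 0 < β) (hμ : 0 < μ) (humax : 0 < umax)
    (hτs : 0 < τs) (hτsT : τs < T)
    (S I lS lI : ℝ → ℝ)
    (hpos : ∀ t ∈ Set.Icc 0 T, 0 < S t ∧ 0 < I t)
    (hS2 : ∀ t ∈ Set.Icc τs T,
      HasDerivWithinAt S (-(β * S t * I t) - umax * S t) (Set.Icc τs T) t)
    (hI2 : ∀ t ∈ Set.Icc τs T,
      HasDerivWithinAt I (β * S t * I t - μ * I t) (Set.Icc τs T) t)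
    (hlS : ∀ t ∈ Set.Icc τs T,
      HasDerivWithinAt lS ((lS t - lI t) * β * I t + umax * lS t) (Set.Icc τs T) t)
    (hlI : ∀ t ∈ Set.Icc τs T,
      HasDerivWithinAt lI ((lS t - lI t) * β * S t + μ * lI t) (Set.Icc τs T) t)
    (hH : ∀ t ∈ Set.Icc τs T,
      1 - (β * S t * I t + umax * S t) * lS t + (β * S t * I t - μ * I t) * lI t = 0)
    (htrans : lS T = 0)
    (hψτs : -(S τs * lS τs) = 0)
    (hψneg : ∀ t ∈ Set.Ioo τs T, -(S t * lS t) < 0) :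
    ∃ m M : ℝ, m ∈ Set.Ioo τs T ∧ M ∈ Set.Ioo τs T ∧
      -- (i) `m` is the unique critical point of `ψ` in `(τs, T)` and is a minimum point
      IsMinOn (fun t => -(S t * lS t)) (Set.Icc τs T) m ∧
      (∀ t ∈ Set.Ioo τs T, deriv (fun t' => -(S t' * lS t')) t = 0 → t = m) ∧
      lI m = 0 ∧ 0 < lS m ∧ lI m < lS m ∧
      -- (ii) `λS` is positive on `(τs, T)`, vanishes at the endpoints, and has a unique
      -- maximum point `M` in `(τs, T)`
      (∀ t ∈ Set.Ioo τs T, 0 < lS t) ∧ lS τs = 0 ∧ lS T = 0 ∧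
      IsMaxOn lS (Set.Icc τs T) M ∧
      (∀ t ∈ Set.Ioo τs T, IsMaxOn lS (Set.Icc τs T) t → t = M) ∧
      lI M = 1 / (μ * I M) ∧
      lS M = β * I M * lI M / (β * I M + umax) ∧
      lS M < lI M ∧
      -- (iii)
      m < M := by
  have hsub : Icc τs T ⊆ Icc 0 T := Icc_subset_Icc hτs.le le_rfl
  have hSpos : ∀ t ∈ Icc τs T, 0 < S t := fun t ht => (hpos t (hsub ht)).1
  have hlSτs : lS τs = 0 :=
    (mul_eq_zero.1 (neg_eq_zero.1 hψτs)).resolve_left (hSpos τs (left_mem_Icc.2 hτsT.le)).ne'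
  have hlSpos : ∀ t ∈ Ioo τs T, 0 < lS t := fun t ht =>
    pos_of_mul_pos_right (neg_neg_iff_pos.1 (hψneg t ht)) (hSpos t (Ioo_subset_Icc_self ht)).le
  have h : IsVaccinationExtremal β μ umax τs T S I lS lI :=
    ⟨fun t ht => hSpos t (Ioo_subset_Icc_self ht),
      fun t ht => (hpos t (hsub (Ioo_subset_Icc_self ht))).2, hlSpos,
      hasDerivAt_of_hasDerivWithinAt_Icc hS2, hasDerivAt_of_hasDerivWithinAt_Icc hI2,
      hasDerivAt_of_hasDerivWithinAt_Icc hlS, hasDerivAt_of_hasDerivWithinAt_Icc hlI,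
      fun t ht => hH t (Ioo_subset_Icc_self ht)⟩
  have hnhds : ∀ {t}, t ∈ Ioo τs T → Icc τs T ∈ 𝓝 t := fun ht => Icc_mem_nhds ht.1 ht.2
  have hlScont : ContinuousOn lS (Icc τs T) := fun t ht => (hlS t ht).continuousWithinAt
  have hScont : ContinuousOn S (Icc τs T) := fun t ht => (hS2 t ht).continuousWithinAt
  obtain ⟨t₀, ht₀⟩ : (Ioo τs T).Nonempty := nonempty_Ioo.2 hτsT
  obtain ⟨m, hm, hm_max⟩ := exists_mem_Ioo_isMaxOn_of_pos (hScont.mul hlScont)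
    (by simp [hlSτs]) (by simp [htrans])
    ⟨t₀, ht₀, mul_pos (h.S_pos t₀ ht₀) (hlSpos t₀ ht₀)⟩
  obtain ⟨M, hM, hM_max⟩ :=
    exists_mem_Ioo_isMaxOn_of_pos hlScont hlSτs htrans ⟨t₀, ht₀, hlSpos t₀ ht₀⟩
  have hlIm : lI m = 0 := h.lI_eq_zero_of_deriv_switching_eq_zero hβ hm
    (hm_max.neg.isLocalMin (hnhds hm)).deriv_eq_zero
  have hMloc : IsLocalMax lS M := hM_max.isLocalMax (hnhds hM)
  refine ⟨m, M, hm, hM, hm_max.neg, fun t ht hd => ?_, hlIm, hlSpos m hm, hlIm ▸ hlSpos m hm,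
    hlSpos, hlSτs, htrans, hM_max, fun t ht htmax => ?_,
    h.lI_eq_of_isLocalMax_lS hμ hM hMloc,
    h.lS_eq_of_isLocalMax_lS hβ humax.le hM hMloc,
    h.lS_lt_lI_of_isLocalMax_lS hβ hμ humax hM hMloc,
    h.lt_of_lI_eq_zero_of_lI_pos hβ hm hM hlIm (h.lI_pos_of_isLocalMax_lS hμ hM hMloc)⟩
  · exact h.eq_of_lI_eq_zero hβ hm ht hlIm (h.lI_eq_zero_of_deriv_switching_eq_zero hβ ht hd)
  · exact h.eq_of_isLocalMax_lS hβ hμ hM ht hMloc (htmax.isLocalMax (hnhds ht))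

/-- PMP structure for a delayed extremal of the vaccination-controlled SIR system
(`(α₁, α₂) = (1, 0)`) with switching time `0 < τs < T`: with `ψ(t) = -S(t)λS(t)`,
(i) `ψ` has exactly one critical point `m` in `(τs, T)`, a minimum, where
`λI(m) = 0 < λS(m)`; (ii) `λS` is positive on `(τs, T)`, vanishes at `τs` and `T`, and has
a unique maximum point `M` in `(τs, T)`, where `λI(M) = 1/(μ I(M))` and
`λS(M) = βI(M)λI(M)/(βI(M) + u_max) < λI(M)`; (iii) `m < M`. -/
theorem vaccination_delayed_extremal_structure
    (β μ umax τs T : ℝ)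
    (hβ : 0 < β) (hμ : 0 < μ) (humax : 0 < umax)
    (hτs : 0 < τs) (hτsT : τs < T)
    (S I lS lI : ℝ → ℝ)
    (hpos : ∀ t ∈ Set.Icc 0 T, 0 < S t ∧ 0 < I t)
    (hS1 : ∀ t ∈ Set.Icc 0 τs,
      HasDerivWithinAt S (-(β * S t * I t)
        - delayedControl umax τs t * S t) (Set.Icc 0 τs) t)
    (hI1 : ∀ t ∈ Set.Icc 0 τs,
      HasDerivWithinAt I (β * S t * I t - μ * I t) (Set.Icc 0 τs) t)
    (hS2 : ∀ t ∈ Set.Icc τs T,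
      HasDerivWithinAt S (-(β * S t * I t) - umax * S t) (Set.Icc τs T) t)
    (hI2 : ∀ t ∈ Set.Icc τs T,
      HasDerivWithinAt I (β * S t * I t - μ * I t) (Set.Icc τs T) t)
    (hlS : ∀ t ∈ Set.Icc τs T,
      HasDerivWithinAt lS ((lS t - lI t) * β * I t + umax * lS t) (Set.Icc τs T) t)
    (hlI : ∀ t ∈ Set.Icc τs T,
      HasDerivWithinAt lI ((lS t - lI t) * β * S t + μ * lI t) (Set.Icc τs T) t)
    (hH : ∀ t ∈ Set.Icc τs T,
      1 - (β * S t * I t + umax * S t) * lS t + (β * S t * I t - μ * I t) * lI t = 0)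
    (htrans : lS T = 0)
    (hψτs : -(S τs * lS τs) = 0)
    (hψneg : ∀ t ∈ Set.Ioo τs T, -(S t * lS t) < 0) :
    ∃ m M : ℝ, m ∈ Set.Ioo τs T ∧ M ∈ Set.Ioo τs T ∧
      -- (i) `m` is the unique critical point of `ψ` in `(τs, T)` and is a minimum point
      IsMinOn (fun t => -(S t * lS t)) (Set.Icc τs T) m ∧
      (∀ t ∈ Set.Ioo τs T, deriv (fun t' => -(S t' * lS t')) t = 0 → t = m) ∧
      lI m = 0 ∧ 0 < lS m ∧ lI m < lS m ∧
      -- (ii) `λS` is positive on `(τs, T)`, vanishes at the endpoints, and has a unique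
      -- maximum point `M` in `(τs, T)`
      (∀ t ∈ Set.Ioo τs T, 0 < lS t) ∧ lS τs = 0 ∧ lS T = 0 ∧
      IsMaxOn lS (Set.Icc τs T) M ∧
      (∀ t ∈ Set.Ioo τs T, IsMaxOn lS (Set.Icc τs T) t → t = M) ∧
      lI M = 1 / (μ * I M) ∧
      lS M = β * I M * lI M / (β * I M + umax) ∧
      lS M < lI M ∧
      -- (iii)
      m < M :=
  vaccination_delayed_extremal_structure_general β μ umax τs T hβ hμ humax hτs hτsT S I lS lI hpos
    hS2 hI2 hlS hlI hH htrans hψτs hψneg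
end

section
/- Vaccination case ((α₁, α₂) = (1, 0)): let (S, I) be a trajectory of the vaccination-controlled SIR system on [0, T] with S, I > 0 throughout, with βS(0)/μ > 1 and control u = u(·;τ_s) for some 0 < τ_s < T, and suppose (λ_S, λ_I) solves the adjoint system on [τ_s, T] with the Hamiltonian identically zero, λ_S(T) = 0, ψ(τ_s) = 0, and ψ < 0 on (τ_s, T), where ψ(t) = −S(t)λ_S(t). Then necessarily μ > u_max. Equivalently, if u_max ≥ μ no such delayed extremal exists, so the time-optimal vaccination control is the constant control u ≡ u_max. -/
open Set

theorem IsMinOn.hasDerivWithinAt_mul_sub_nonneg {f : ℝ → ℝ} {s : Set ℝ} {x y d : ℝ}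
    (hs : Convex ℝ s) (hmin : IsMinOn f s x) (hf : HasDerivWithinAt f d s x) (hx : x ∈ s)
    (hy : y ∈ s) : 0 ≤ d * (y - x) := by
  simpa [mul_comm] using hmin.localize.hasFDerivWithinAt_nonneg hf.hasFDerivWithinAt
    (sub_mem_posTangentConeAt_of_segment_subset (hs.segment_subset hx hy))

section VaccinationExtremal

variable {β μ umax : ℝ} {S I lS lI : ℝ → ℝ} {s : Set ℝ} {t : ℝ}

theorem hasDerivWithinAt_state_mul_costate
    (hS : HasDerivWithinAt S (-(β * S t * I t) - umax * S t) s t)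
    (hlS : HasDerivWithinAt lS ((lS t - lI t) * β * I t + umax * lS t) s t) :
    HasDerivWithinAt (fun t => S t * lS t) (-(β * S t * I t * lI t)) s t :=
  (hS.mul hlS).congr_deriv (by ring)

theorem costateI_mul_sub_neg {D : Set ℝ} {x y : ℝ} (hD : Convex ℝ D) (hx : x ∈ D) (hy : y ∈ D)
    (hxy : x ≠ y) (hβ : 0 < β) (hSx : 0 < S x) (hIx : 0 < I x)
    (hS : HasDerivWithinAt S (-(β * S x * I x) - umax * S x) D x)
    (hlS : HasDerivWithinAt lS ((lS x - lI x) * β * I x + umax * lS x) D x)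
    (hSlS : ∀ t ∈ D, 0 ≤ S t * lS t) (hlSx : lS x = 0)
    (hH : 1 - (β * S x * I x + umax * S x) * lS x + (β * S x * I x - μ * I x) * lI x = 0) :
    lI x * (y - x) < 0 := by
  have hmin : IsMinOn (fun t => S t * lS t) D x := fun t ht => by
    simpa [hlSx] using hSlS t ht
  have hderiv := hmin.hasDerivWithinAt_mul_sub_nonneg hD
    (hasDerivWithinAt_state_mul_costate hS hlS) hx hy
  have hlIx : lI x ≠ 0 := by
    rintro h
    simp [h, hlSx] at hH
  have hβSI : 0 < β * S x * I x := by positivity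
  have hyx : y - x ≠ 0 := sub_ne_zero.2 hxy.symm
  refine lt_of_le_of_ne ?_ (mul_ne_zero hlIx hyx)
  nlinarith

/-- The weight `e^{u_max t}` cancels the `λ_I` term in the derivative of `(λ_S - λ_I) S I`. -/
noncomputable def weightedCostateGap (umax : ℝ) (S I lS lI : ℝ → ℝ) (t : ℝ) : ℝ :=
  (lS t - lI t) * (S t * (I t * Real.exp (umax * t)))

theorem weightedCostateGap_pos_iff_of_costateS_eq_zero (h : lS t = 0) (hS : 0 < S t)
    (hI : 0 < I t) : 0 < weightedCostateGap umax S I lS lI t ↔ lI t < 0 := by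
  have : 0 < S t * (I t * Real.exp (umax * t)) := by positivity
  rw [weightedCostateGap, h, zero_sub, mul_pos_iff_of_pos_right this, neg_pos]

theorem hasDerivWithinAt_weightedCostateGap
    (hS : HasDerivWithinAt S (-(β * S t * I t) - umax * S t) s t)
    (hI : HasDerivWithinAt I (β * S t * I t - μ * I t) s t)
    (hlS : HasDerivWithinAt lS ((lS t - lI t) * β * I t + umax * lS t) s t)
    (hlI : HasDerivWithinAt lI ((lS t - lI t) * β * S t + μ * lI t) s t) :
    HasDerivWithinAt (weightedCostateGap umax S I lS lI)
      ((umax - μ) * lS t * (S t * (I t * Real.exp (umax * t)))) s t := by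
  have hexp : HasDerivWithinAt (fun t => Real.exp (umax * t)) (Real.exp (umax * t) * umax) s t :=
    ((hasDerivAt_id t).const_mul umax).exp.hasDerivWithinAt.congr_deriv (by simp)
  exact ((hlS.sub hlI).mul (hS.mul (hI.mul hexp))).congr_deriv
    (by simp only [Pi.mul_apply, Pi.sub_apply]; ring)

theorem monotoneOn_weightedCostateGap {D : Set ℝ} (hD : Convex ℝ D) (hμ : μ ≤ umax)
    (hS : ∀ t ∈ D, HasDerivWithinAt S (-(β * S t * I t) - umax * S t) D t)
    (hI : ∀ t ∈ D, HasDerivWithinAt I (β * S t * I t - μ * I t) D t)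
    (hlS : ∀ t ∈ D, HasDerivWithinAt lS ((lS t - lI t) * β * I t + umax * lS t) D t)
    (hlI : ∀ t ∈ D, HasDerivWithinAt lI ((lS t - lI t) * β * S t + μ * lI t) D t)
    (hS_nonneg : ∀ t ∈ D, 0 ≤ S t) (hI_nonneg : ∀ t ∈ D, 0 ≤ I t)
    (hlS_nonneg : ∀ t ∈ D, 0 ≤ lS t) :
    MonotoneOn (weightedCostateGap umax S I lS lI) D := by
  have hderiv := fun t (ht : t ∈ D) ↦
    hasDerivWithinAt_weightedCostateGap (hS t ht) (hI t ht) (hlS t ht) (hlI t ht)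
  refine monotoneOn_of_hasDerivWithinAt_nonneg hD (fun t ht ↦ (hderiv t ht).continuousWithinAt)
    (fun t ht ↦ (hderiv t (interior_subset ht)).mono interior_subset) fun t ht ↦ ?_
  have := sub_nonneg.2 hμ
  have := hS_nonneg t (interior_subset ht)
  have := hI_nonneg t (interior_subset ht)
  have := hlS_nonneg t (interior_subset ht)
  positivity

end VaccinationExtremal

theorem vaccination_delayed_extremal_needs_mu_gt_umax_general
    (β μ umax τs T : ℝ)
    (hβ : 0 < β)
    (hτs : 0 < τs) (hτsT : τs < T)
    (S I lS lI : ℝ → ℝ)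
    (hpos : ∀ t ∈ Set.Icc 0 T, 0 < S t ∧ 0 < I t)
    (hS2 : ∀ t ∈ Set.Icc τs T,
      HasDerivWithinAt S (-(β * S t * I t) - umax * S t) (Set.Icc τs T) t)
    (hI2 : ∀ t ∈ Set.Icc τs T,
      HasDerivWithinAt I (β * S t * I t - μ * I t) (Set.Icc τs T) t)
    (hlS : ∀ t ∈ Set.Icc τs T,
      HasDerivWithinAt lS ((lS t - lI t) * β * I t + umax * lS t) (Set.Icc τs T) t)
    (hlI : ∀ t ∈ Set.Icc τs T,
      HasDerivWithinAt lI ((lS t - lI t) * β * S t + μ * lI t) (Set.Icc τs T) t)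
    (hH : ∀ t ∈ Set.Icc τs T,
      1 - (β * S t * I t + umax * S t) * lS t + (β * S t * I t - μ * I t) * lI t = 0)
    (htrans : lS T = 0)
    (hψτs : -(S τs * lS τs) = 0)
    (hψneg : ∀ t ∈ Set.Ioo τs T, -(S t * lS t) < 0) :
    umax < μ := by
  by_contra! hμumax
  have hτs_mem : τs ∈ Icc τs T := left_mem_Icc.2 hτsT.le
  have hT_mem : T ∈ Icc τs T := right_mem_Icc.2 hτsT.le
  have hSI : ∀ t ∈ Icc τs T, 0 < S t ∧ 0 < I t := fun t ht ↦
    hpos t (Icc_subset_Icc_left hτs.le ht)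
  have hlSτs : lS τs = 0 := by simpa [(hSI τs hτs_mem).1.ne'] using hψτs
  have hSlS : ∀ t ∈ Icc τs T, 0 ≤ S t * lS t := by
    intro t ht
    rcases eq_endpoints_or_mem_Ioo_of_mem_Icc ht with rfl | rfl | ht'
    · simp [hlSτs]
    · simp [htrans]
    · linarith [hψneg t ht']
  have hlS_nonneg : ∀ t ∈ Icc τs T, 0 ≤ lS t := fun t ht ↦
    (mul_nonneg_iff_of_pos_left (hSI t ht).1).1 (hSlS t ht)
  have hlIτs : lI τs < 0 := neg_of_mul_neg_left (costateI_mul_sub_neg (convex_Icc τs T)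
    hτs_mem hT_mem hτsT.ne hβ (hSI τs hτs_mem).1 (hSI τs hτs_mem).2 (hS2 τs hτs_mem)
    (hlS τs hτs_mem) hSlS hlSτs (hH τs hτs_mem)) (by linarith)
  have hlIT : 0 < lI T := pos_of_mul_neg_left (costateI_mul_sub_neg (convex_Icc τs T)
    hT_mem hτs_mem hτsT.ne' hβ (hSI T hT_mem).1 (hSI T hT_mem).2 (hS2 T hT_mem)
    (hlS T hT_mem) hSlS htrans (hH T hT_mem)) (by linarith)
  have hgap_le := monotoneOn_weightedCostateGap (convex_Icc τs T) hμumax hS2 hI2 hlS hlI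
    (fun t ht ↦ (hSI t ht).1.le) (fun t ht ↦ (hSI t ht).2.le) hlS_nonneg hτs_mem hT_mem hτsT.le
  have hgτs := (weightedCostateGap_pos_iff_of_costateS_eq_zero (umax := umax) hlSτs
    (hSI τs hτs_mem).1 (hSI τs hτs_mem).2).2 hlIτs
  have hlIT_neg := (weightedCostateGap_pos_iff_of_costateS_eq_zero htrans
    (hSI T hT_mem).1 (hSI T hT_mem).2).1 (hgτs.trans_le hgap_le)
  exact hlIT.not_gt hlIT_neg

/-- PMP for the vaccination-controlled SIR system (`(α₁, α₂) = (1, 0)`): if `βS(0)/μ > 1`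
and a delayed extremal with switching time `0 < τs < T` exists (Hamiltonian identically
zero on `[τs, T]`, `λS(T) = 0`, `ψ(τs) = 0` and `ψ < 0` on `(τs, T)` for
`ψ(t) = -S(t)λS(t)`), then necessarily `μ > u_max`; equivalently, if `u_max ≥ μ` no such
delayed extremal exists and the optimal vaccination control is constant `u ≡ u_max`. -/
theorem vaccination_delayed_extremal_needs_mu_gt_umax
    (β μ umax τs T : ℝ)
    (hβ : 0 < β) (hμ : 0 < μ) (humax : 0 < umax)
    (hτs : 0 < τs) (hτsT : τs < T)
    (S I lS lI : ℝ → ℝ)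
    (hR0 : 1 < β * S 0 / μ)
    (hpos : ∀ t ∈ Set.Icc 0 T, 0 < S t ∧ 0 < I t)
    (hS1 : ∀ t ∈ Set.Icc 0 τs,
      HasDerivWithinAt S (-(β * S t * I t)
        - delayedControl umax τs t * S t) (Set.Icc 0 τs) t)
    (hI1 : ∀ t ∈ Set.Icc 0 τs,
      HasDerivWithinAt I (β * S t * I t - μ * I t) (Set.Icc 0 τs) t)
    (hS2 : ∀ t ∈ Set.Icc τs T,
      HasDerivWithinAt S (-(β * S t * I t) - umax * S t) (Set.Icc τs T) t)
    (hI2 : ∀ t ∈ Set.Icc τs T,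
      HasDerivWithinAt I (β * S t * I t - μ * I t) (Set.Icc τs T) t)
    (hlS : ∀ t ∈ Set.Icc τs T,
      HasDerivWithinAt lS ((lS t - lI t) * β * I t + umax * lS t) (Set.Icc τs T) t)
    (hlI : ∀ t ∈ Set.Icc τs T,
      HasDerivWithinAt lI ((lS t - lI t) * β * S t + μ * lI t) (Set.Icc τs T) t)
    (hH : ∀ t ∈ Set.Icc τs T,
      1 - (β * S t * I t + umax * S t) * lS t + (β * S t * I t - μ * I t) * lI t = 0)
    (htrans : lS T = 0)
    (hψτs : -(S τs * lS τs) = 0)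
    (hψneg : ∀ t ∈ Set.Ioo τs T, -(S t * lS t) < 0) :
    umax < μ :=
  vaccination_delayed_extremal_needs_mu_gt_umax_general β μ umax τs T hβ hτs hτsT S I lS lI hpos hS2
    hI2 hlS hlI hH htrans hψτs hψneg
end

section
/- For the controlled SIR system with linear control term with initial data S(0) > 0 and I(0) > ε > 0, and for every τ ≥ 0, the trajectory driven by the delayed bang-bang control u(·;τ) has a well-defined eradication time: there exists T ≥ 0 such that I(T) = ε and I(t) > ε for all t ∈ [0, T). -/
/-!
Before eradication, `I > ε`, and the control only removes mass, so the total population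
decays at rate at least `μ I ≥ μ ε`: `(S + I)' = -μI - α₁uS - α₂uI ≤ -με`, provided `S ≥ 0`.
Positivity of `S` comes from the integrating factor, since `S' = a S` with
`a = -βI - α₁u`; the one-sided fundamental theorem of calculus applies because the
bang-bang control is right-continuous. Hence `I` reaches `ε` before time
`(S(0) + I(0)) / (με)`, and the eradication time is the infimum of the closed set
`{t ≥ 0 | I t ≤ ε}`.
-/

open MeasureTheory Set

open Filter Topology Real

theorem uIcc_zero_subset_Ici_zero {t : ℝ} (ht : 0 ≤ t) : uIcc 0 t ⊆ Ici 0 := by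
  rw [uIcc_of_le ht]
  exact Icc_subset_Ici_self

section IntegratingFactor

variable {a F : ℝ → ℝ}

theorem hasDerivWithinAt_integral_Ici_of_continuousWithinAt
    (ha : ∀ t, 0 ≤ t → IntervalIntegrable a volume 0 t) {x : ℝ} (hx : 0 ≤ x)
    (hax : ContinuousWithinAt a (Ici x) x) :
    HasDerivWithinAt (fun t => ∫ s in (0:ℝ)..t, a s) (a x) (Ici x) x := by
  have hmeas : StronglyMeasurableAtFilter a (𝓝[>] x) volume := by
    have hint := (intervalIntegrable_iff_integrableOn_Ioc_of_le (by linarith)).1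
      (ha (x + 1) (by linarith))
    refine AEStronglyMeasurable.stronglyMeasurableAtFilter_of_mem hint.aestronglyMeasurable ?_
    exact mem_of_superset (Ioc_mem_nhdsGT (lt_add_one x)) (Ioc_subset_Ioc_left hx)
  exact intervalIntegral.integral_hasDerivWithinAt_right (ha x hx) hmeas
    (hax.mono Ioi_subset_Ici_self)

theorem eq_mul_exp_integral_of_eq_add_integral_mul (hF : ContinuousOn F (Ici 0))
    (ha : ∀ t, 0 ≤ t → IntervalIntegrable a volume 0 t)
    (ha_rc : ∀ x, 0 ≤ x → ContinuousWithinAt a (Ici x) x)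
    (hFeq : ∀ t, 0 ≤ t → F t = F 0 + ∫ s in (0:ℝ)..t, a s * F s) {t : ℝ} (ht : 0 ≤ t) :
    F t = F 0 * exp (∫ s in (0:ℝ)..t, a s) := by
  set A : ℝ → ℝ := fun t => ∫ s in (0:ℝ)..t, a s
  have hA_cont : ContinuousOn A (Icc 0 t) := by
    rw [← uIcc_of_le ht]
    exact intervalIntegral.continuousOn_primitive_interval' (ha t ht) left_mem_uIcc
  have hF_rc : ∀ x, 0 ≤ x → ContinuousWithinAt F (Ici x) x := fun x hx =>
    (hF.continuousWithinAt hx).mono (Ici_subset_Ici.2 hx)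
  have haF : ∀ t, 0 ≤ t → IntervalIntegrable (fun s => a s * F s) volume 0 t := fun t ht =>
    (ha t ht).mul_continuousOn (hF.mono (uIcc_zero_subset_Ici_zero ht))
  have hderiv : ∀ x ∈ Ico 0 t,
      HasDerivWithinAt (fun s => F s * exp (-A s)) 0 (Ici x) x := by
    rintro x ⟨hx, -⟩
    have hF' : HasDerivWithinAt F (a x * F x) (Ici x) x :=
      ((hasDerivWithinAt_integral_Ici_of_continuousWithinAt haF hx
        ((ha_rc x hx).mul (hF_rc x hx))).const_add (F 0)).congr
        (fun y hy => hFeq y (hx.trans hy)) (hFeq x hx)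
    have hE := (hasDerivWithinAt_integral_Ici_of_continuousWithinAt ha hx (ha_rc x hx)).neg.exp
    exact (hF'.mul hE).congr_deriv (by ring)
  have hconst := constant_of_has_deriv_right_zero (f := fun s => F s * exp (-A s))
    ((hF.mono Icc_subset_Ici_self).mul (continuous_exp.comp_continuousOn hA_cont.neg))
    hderiv t (right_mem_Icc.2 ht)
  simp only [A, intervalIntegral.integral_same, neg_zero, exp_zero, mul_one] at hconst
  rw [← hconst, mul_assoc, ← exp_add, neg_add_cancel, exp_zero, mul_one]

end IntegratingFactor

theorem delayedControl_nonneg {umax : ℝ} (h : 0 ≤ umax) (τ t : ℝ) :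
    0 ≤ delayedControl umax τ t := by
  unfold delayedControl; split_ifs <;> simp [h]

theorem delayedControl_eq_indicator (umax τ : ℝ) :
    delayedControl umax τ = (Ici τ).indicator fun _ => umax := by
  ext t
  by_cases h : t < τ <;> simp [delayedControl, h, indicator]

theorem intervalIntegrable_delayedControl (umax τ a b : ℝ) :
    IntervalIntegrable (delayedControl umax τ) volume a b := by
  rw [delayedControl_eq_indicator, intervalIntegrable_iff]
  exact (integrableOn_const (by simp)).indicator measurableSet_Ici

theorem continuousWithinAt_delayedControl_Ici (umax τ x : ℝ) :
    ContinuousWithinAt (delayedControl umax τ) (Ici x) x := by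
  have hconst : ∀ᶠ y in 𝓝[Ici x] x, delayedControl umax τ y = delayedControl umax τ x := by
    rcases lt_or_ge x τ with h | h
    · filter_upwards [mem_nhdsWithin_of_mem_nhds (Iio_mem_nhds h)] with y hy
      simp [delayedControl, h, show y < τ from hy]
    · filter_upwards [self_mem_nhdsWithin] with y hy
      simp [delayedControl, not_lt.2 h, not_lt.2 (h.trans hy)]
  exact continuousWithinAt_const.congr_of_eventuallyEq hconst rfl

namespace IsLinTraj

variable {β μ α₁ α₂ : ℝ} {u S I : ℝ → ℝ}

theorem intervalIntegrable_S_integrand (h : IsLinTraj β μ α₁ α₂ u S I) {t : ℝ} (ht : 0 ≤ t)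
    (hu : IntervalIntegrable u volume 0 t) :
    IntervalIntegrable (fun s => -(β * S s * I s) - α₁ * u s * S s) volume 0 t := by
  have hS := h.1.mono (uIcc_zero_subset_Ici_zero ht)
  have hI := h.2.1.mono (uIcc_zero_subset_Ici_zero ht)
  exact ((continuousOn_const.mul hS).mul hI).neg.intervalIntegrable.sub
    ((hu.continuousOn_mul continuousOn_const).mul_continuousOn hS)

theorem intervalIntegrable_I_integrand (h : IsLinTraj β μ α₁ α₂ u S I) {t : ℝ} (ht : 0 ≤ t)
    (hu : IntervalIntegrable u volume 0 t) :
    IntervalIntegrable (fun s => β * S s * I s - μ * I s - α₂ * u s * I s) volume 0 t := by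
  have hS := h.1.mono (uIcc_zero_subset_Ici_zero ht)
  have hI := h.2.1.mono (uIcc_zero_subset_Ici_zero ht)
  exact (((continuousOn_const.mul hS).mul hI).sub
    (continuousOn_const.mul hI)).intervalIntegrable.sub
    ((hu.continuousOn_mul continuousOn_const).mul_continuousOn hI)

theorem S_pos (h : IsLinTraj β μ α₁ α₂ u S I)
    (hu : ∀ t, 0 ≤ t → IntervalIntegrable u volume 0 t)
    (hu_rc : ∀ x, 0 ≤ x → ContinuousWithinAt u (Ici x) x) (hS0 : 0 < S 0)
    {t : ℝ} (ht : 0 ≤ t) : 0 < S t := by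
  obtain ⟨hS, hI, hSeq, -⟩ := h
  have ha : ∀ t, 0 ≤ t → IntervalIntegrable (fun s => -(β * I s) - α₁ * u s) volume 0 t :=
    fun t ht => (continuousOn_const.mul (hI.mono (uIcc_zero_subset_Ici_zero ht))).neg
      |>.intervalIntegrable.sub ((hu t ht).continuousOn_mul continuousOn_const)
  have ha_rc : ∀ x, 0 ≤ x → ContinuousWithinAt (fun s => -(β * I s) - α₁ * u s) (Ici x) x :=
    fun x hx => ((((hI.continuousWithinAt hx).mono (Ici_subset_Ici.2 hx)).const_mul β).neg).sub
      ((hu_rc x hx).const_mul α₁)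
  rw [eq_mul_exp_integral_of_eq_add_integral_mul hS ha ha_rc
    (fun t ht => by rw [hSeq t ht]; congr 2; ext s; ring) ht]
  positivity

/-- The infection terms cancel in `(S + I)'`, and the control terms are nonpositive. -/
theorem add_le_sub_mul (h : IsLinTraj β μ α₁ α₂ u S I) (hμ : 0 ≤ μ)
    (hα₁ : 0 ≤ α₁) (hα₂ : 0 ≤ α₂) (hu_nonneg : ∀ t, 0 ≤ u t)
    {t c : ℝ} (ht : 0 ≤ t) (hc : 0 ≤ c) (hu : IntervalIntegrable u volume 0 t)
    (hS : ∀ s ∈ Icc 0 t, 0 ≤ S s) (hI : ∀ s ∈ Icc 0 t, c ≤ I s) :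
    S t + I t ≤ S 0 + I 0 - μ * c * t := by
  have hf := h.intervalIntegrable_S_integrand ht hu
  have hg := h.intervalIntegrable_I_integrand ht hu
  have hmono := intervalIntegral.integral_mono_on ht (hf.add hg)
    (intervalIntegrable_const (c := -(μ * c))) fun s hs => by
      have := hI s hs
      nlinarith [mul_nonneg (mul_nonneg hα₁ (hu_nonneg s)) (hS s hs),
        mul_nonneg (mul_nonneg hα₂ (hu_nonneg s)) (hc.trans this)]
  rw [intervalIntegral.integral_add hf hg, intervalIntegral.integral_const, smul_eq_mul] at hmono
  rw [h.2.2.1 t ht, h.2.2.2 t ht]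
  linarith

theorem exists_I_le (h : IsLinTraj β μ α₁ α₂ u S I) (hμ : 0 < μ)
    (hα₁ : 0 ≤ α₁) (hα₂ : 0 ≤ α₂) (hu_nonneg : ∀ t, 0 ≤ u t)
    (hu : ∀ t, 0 ≤ t → IntervalIntegrable u volume 0 t)
    (hS : ∀ t, 0 ≤ t → 0 ≤ S t) {ε : ℝ} (hε : 0 < ε) :
    ∃ t, 0 ≤ t ∧ I t ≤ ε := by
  by_contra! hno
  have hsum : 0 ≤ S 0 + I 0 := add_nonneg (hS 0 le_rfl) (hε.trans (hno 0 le_rfl)).le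
  set t₀ := (S 0 + I 0) / (μ * ε)
  have ht₀ : 0 ≤ t₀ := by positivity
  have hdecay := h.add_le_sub_mul hμ.le hα₁ hα₂ hu_nonneg ht₀ hε.le (hu t₀ ht₀)
    (fun s hs => hS s hs.1) (fun s hs => (hno s hs.1).le)
  have ht₀_mul : μ * ε * t₀ = S 0 + I 0 := mul_div_cancel₀ _ (by positivity)
  linarith [hS t₀ ht₀, hno t₀ ht₀]

end IsLinTraj

theorem exists_isEradicationTime {I : ℝ → ℝ} {ε : ℝ} (hI : ContinuousOn I (Ici 0))
    (hI0 : ε < I 0) (hle : ∃ t, 0 ≤ t ∧ I t ≤ ε) : ∃ T, IsEradicationTime I ε T := by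
  set A := Ici 0 ∩ I ⁻¹' Iic ε
  have hbdd : BddBelow A := ⟨0, fun _ hx => hx.1⟩
  obtain ⟨hT0, hTle⟩ : sInf A ∈ A :=
    (hI.preimage_isClosed_of_isClosed isClosed_Ici isClosed_Iic).csInf_mem hle hbdd
  have hbefore : ∀ t, 0 ≤ t → t < sInf A → ε < I t := fun t ht htT =>
    lt_of_not_ge fun hIt => (csInf_le hbdd ⟨ht, hIt⟩).not_gt htT
  obtain ⟨c, ⟨hc0, hcT⟩, hIc⟩ :=
    intermediate_value_Icc' hT0 (hI.mono Icc_subset_Ici_self) ⟨hTle, hI0.le⟩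
  have hc : c = sInf A := hcT.eq_or_lt.resolve_right fun h => (hbefore c hc0 h).ne' hIc
  exact ⟨sInf A, hT0, hc ▸ hIc, hbefore⟩

theorem linear_delayed_control_eradication_time_exists_general
    (β μ umax α₁ α₂ ε τ : ℝ)
    (hμ : 0 < μ) (humax : 0 < umax)
    (hα₁ : 0 ≤ α₁) (hα₂ : 0 ≤ α₂)
    (hε : 0 < ε)
    (S I : ℝ → ℝ)
    (htraj : IsLinTraj β μ α₁ α₂ (delayedControl umax τ) S I)
    (hS0 : 0 < S 0) (hI0 : ε < I 0) :
    ∃ T, IsEradicationTime I ε T := by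
  have hu := fun t (_ : 0 ≤ t) => intervalIntegrable_delayedControl umax τ 0 t
  have hS : ∀ t, 0 ≤ t → 0 ≤ S t := fun t ht =>
    (htraj.S_pos hu (fun x _ => continuousWithinAt_delayedControl_Ici umax τ x) hS0 ht).le
  exact exists_isEradicationTime htraj.2.1 hI0
    (htraj.exists_I_le hμ hα₁ hα₂ (delayedControl_nonneg humax.le τ) hu hS hε)

/-- For the linear-control SIR system driven by any delayed bang-bang control `u(·;τ)`,
the eradication time is well defined: there is a first time `T` at which `I(T) = ε`. -/
theorem linear_delayed_control_eradication_time_exists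
    (β μ umax α₁ α₂ ε τ : ℝ)
    (hβ : 0 < β) (hμ : 0 < μ) (humax : 0 < umax)
    (hα₁ : 0 ≤ α₁) (hα₂ : 0 ≤ α₂) (hα : ¬(α₁ = 0 ∧ α₂ = 0))
    (hε : 0 < ε) (hτ : 0 ≤ τ)
    (S I : ℝ → ℝ)
    (htraj : IsLinTraj β μ α₁ α₂ (delayedControl umax τ) S I)
    (hS0 : 0 < S 0) (hI0 : ε < I 0) :
    ∃ T, IsEradicationTime I ε T :=
  linear_delayed_control_eradication_time_exists_general β μ umax α₁ α₂ ε τ hμ humax hα₁ hα₂ hε S I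
    htraj hS0 hI0
end
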